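/- arXiv:1711.02280 — 7 statements merged into one kernel-verified Lean document; each statement's English description precedes it below -/
import Mathlib

section
/- Let 𝔅 be a C*-algebra and let a, b ∈ 𝔅₊ be such that ‖ac‖ ≤ ‖bc‖ for every c ∈ 𝔅₊. Then a² ≤ b². -/
set_option maxHeartbeats 1000000
set_option synthInstance.maxHeartbeats 400000

open Unitization CStarAlgebra CFC Filter Topology NNReal

/-- Let `𝔅` be a C*-algebra and `a, b ∈ 𝔅₊` be such that `‖a * c‖ ≤ ‖b * c‖` for every
positive `c`. Then `a² ≤ b²`. -/
theorem sq_le_sq_of_norm_mul_le_norm_mul {B : Type*} [NonUnitalCStarAlgebra B]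
    [PartialOrder B] [StarOrderedRing B] {a b : B} (ha : 0 ≤ a) (hb : 0 ≤ b)
    (h : ∀ c : B, 0 ≤ c → ‖a * c‖ ≤ ‖b * c‖) :
    a * a ≤ b * b := by
  have haa : (0:B) ≤ a * a := by
    simpa [(IsSelfAdjoint.of_nonneg ha).star_eq] using star_mul_self_nonneg a
  have hbb : (0:B) ≤ b * b := by
    simpa [(IsSelfAdjoint.of_nonneg hb).star_eq] using star_mul_self_nonneg b
  -- a helper to descend from the unitization
  have hsnd : ∀ z : Unitization ℂ B, z.fst = 0 → ((z.snd : Unitization ℂ B)) = z := by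
    intro z hz
    conv_rhs => rw [← Unitization.inl_fst_add_inr_snd_eq z]
    rw [hz]
    simp
  rw [← Unitization.inr_le_iff _ _ (IsSelfAdjoint.of_nonneg haa) (IsSelfAdjoint.of_nonneg hbb)]
  have key : ∀ ε : ℝ, 0 < ε →
      ((a * a : B) : Unitization ℂ B) ≤ ((b * b : B) : Unitization ℂ B)
        + algebraMap ℝ (Unitization ℂ B) ε := by
    intro ε hε
    set T : Unitization ℂ B := ((b * b : B) : Unitization ℂ B)
        + algebraMap ℝ (Unitization ℂ B) ε with hT_def
    have hε0 : (0 : Unitization ℂ B) ≤ algebraMap ℝ (Unitization ℂ B) ε := by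
      have h1 : algebraMap ℝ (Unitization ℂ B) ε
          = star (algebraMap ℝ (Unitization ℂ B) (Real.sqrt ε))
            * algebraMap ℝ (Unitization ℂ B) (Real.sqrt ε) := by
        rw [(IsSelfAdjoint.algebraMap (Unitization ℂ B) (star_trivial _)).star_eq,
          ← map_mul, Real.mul_self_sqrt hε.le]
      rw [h1]
      exact star_mul_self_nonneg _
    have hT0 : (0 : Unitization ℂ B) ≤ T :=
      add_nonneg (Unitization.inr_nonneg_iff.2 hbb) hε0
    have hεT : algebraMap ℝ (Unitization ℂ B) ε ≤ T :=
      le_add_of_nonneg_left (Unitization.inr_nonneg_iff.2 hbb)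
    have hTu : IsUnit T :=
      CStarAlgebra.isUnit_of_le _ hεT
        (((isUnit_iff_ne_zero.2 hε.ne').map (algebraMap ℝ _)).isStrictlyPositive hε0)
    have hTspec : 0 ∉ spectrum ℝ≥0 T := (spectrum.zero_notMem_iff ℝ≥0).mpr hTu
    set d : Unitization ℂ B := T ^ (-(1/2) : ℝ) with hd_def
    set c : Unitization ℂ B := T ^ (-(1/4) : ℝ) with hc_def
    have hc0 : (0 : Unitization ℂ B) ≤ c := CFC.rpow_nonneg
    have hcc : c * c = d := by
      rw [hc_def, hd_def, ← CFC.rpow_add hTu]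
      norm_num
    have hnorm : ‖(a : Unitization ℂ B) * d‖ ≤ ‖(b : Unitization ℂ B) * d‖ := by
      have hl := CStarAlgebra.increasingApproximateUnit B
      have := hl.toIsApproximateUnit.neBot
      have htend : ∀ x : B, Tendsto (fun e : B => (x : Unitization ℂ B) * (c * e * c))
          (CStarAlgebra.approximateUnit B) (𝓝 ((x : Unitization ℂ B) * d)) := by
        intro x
        set p : B := ((x : Unitization ℂ B) * c).snd with hp
        have hp' : (p : Unitization ℂ B) = (x : Unitization ℂ B) * c :=
          hsnd _ (by simp [Unitization.fst_mul])
        have h1 : Tendsto (fun e : B => p * e) (CStarAlgebra.approximateUnit B) (𝓝 p) :=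
          hl.tendsto_mul_left p
        have h2 : Continuous (fun y : B => (y : Unitization ℂ B) * c) :=
          ((Unitization.isometry_inr (𝕜 := ℂ) (A := B)).continuous).mul continuous_const
        have h3 := (h2.tendsto p).comp h1
        have h4 : ∀ e : B, (x : Unitization ℂ B) * (c * e * c)
            = ((p * e : B) : Unitization ℂ B) * c := by
          intro e
          rw [Unitization.inr_mul, hp']
          noncomm_ring
        have h5 : (x : Unitization ℂ B) * d = (p : Unitization ℂ B) * c := by
          rw [hp', ← hcc]
          noncomm_ring
        rw [h5]
        exact h3.congr fun e => (h4 e).symm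
      have hev : ∀ᶠ (e : B) in CStarAlgebra.approximateUnit B,
          ‖(a : Unitization ℂ B) * (c * e * c)‖ ≤ ‖(b : Unitization ℂ B) * (c * e * c)‖ := by
        filter_upwards [hl.eventually_nonneg] with e he
        set xe : B := (c * (e : Unitization ℂ B) * c).snd with hxe_def
        have hxe : (xe : Unitization ℂ B) = c * e * c :=
          hsnd _ (by simp [Unitization.fst_mul])
        have hxe0 : (0:B) ≤ xe := by
          rw [← Unitization.inr_nonneg_iff, hxe]
          simpa [(IsSelfAdjoint.of_nonneg hc0).star_eq] using
            star_left_conjugate_nonneg (Unitization.inr_nonneg_iff.2 he) c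
        rw [← hxe, ← Unitization.inr_mul, ← Unitization.inr_mul,
          Unitization.norm_inr, Unitization.norm_inr]
        exact h xe hxe0
      exact le_of_tendsto_of_tendsto ((continuous_norm.tendsto _).comp (htend a))
        ((continuous_norm.tendsto _).comp (htend b)) hev
    have hbb' : (0 : Unitization ℂ B) ≤ (b : Unitization ℂ B) * b := by
      rw [← Unitization.inr_mul]; exact Unitization.inr_nonneg_iff.2 hbb
    have haa' : (0 : Unitization ℂ B) ≤ (a : Unitization ℂ B) * a := by
      rw [← Unitization.inr_mul]; exact Unitization.inr_nonneg_iff.2 haa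
    have hbT : (b : Unitization ℂ B) * b ≤ T := by
      rw [hT_def, ← Unitization.inr_mul]
      exact le_add_of_nonneg_right hε0
    have hbd1 : ‖(b : Unitization ℂ B) * d‖ ≤ 1 := by
      have h6 := (le_iff_norm_sqrt_mul_rpow _ _
        hbb' (hTu.isStrictlyPositive hT0)).mp hbT
      rwa [CFC.sqrt_mul_self _ (Unitization.inr_nonneg_iff.2 hb)] at h6
    have had1 : ‖(a : Unitization ℂ B) * d‖ ≤ 1 := hnorm.trans hbd1
    have h7 : (a : Unitization ℂ B) * a ≤ T := by
      rw [le_iff_norm_sqrt_mul_rpow _ _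
        haa' (hTu.isStrictlyPositive hT0),
        CFC.sqrt_mul_self _ (Unitization.inr_nonneg_iff.2 ha)]
      exact had1
    rw [hT_def] at h7
    rwa [Unitization.inr_mul]
  have hlim : Tendsto (fun ε : ℝ => ((b * b : B) : Unitization ℂ B)
      + algebraMap ℝ (Unitization ℂ B) ε) (𝓝[>] (0:ℝ))
      (𝓝 (((b * b : B) : Unitization ℂ B))) := by
    have h8 : Tendsto (fun ε : ℝ => ((b * b : B) : Unitization ℂ B)
        + algebraMap ℝ (Unitization ℂ B) ε) (𝓝 (0:ℝ))
        (𝓝 (((b * b : B) : Unitization ℂ B) + algebraMap ℝ (Unitization ℂ B) 0)) :=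
      tendsto_const_nhds.add ((continuous_algebraMap ℝ (Unitization ℂ B)).tendsto 0)
    simpa using h8.mono_left nhdsWithin_le_nhds
  exact ge_of_tendsto hlim (eventually_nhdsWithin_of_forall fun ε hε => key ε hε)
end

section
/- Let E, H and K be Hilbert 𝔄-modules, T ∈ L(E, K) and T′ ∈ L(H, K). Then the following two statements are equivalent: (i) T′(T′)* ≤ λ TT* for some λ > 0; (ii) there exists μ > 0 such that ‖(T′)*z‖ ≤ μ ‖T*z‖ for all z ∈ K. -/
open scoped RightActions

/-- The Hilbert C⋆-module class as it stood in Mathlib (Dec 2024): a *right* `A`-module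
(action of `Aᵐᵒᵖ`) with `⟪x, y <• a⟫ = ⟪x, y⟫ * a`. Mathlib's `CStarModule` now uses a left action. -/
class CStarModuleRight (A E : Type*) [NonUnitalSemiring A] [StarRing A]
    [Module ℂ A] [AddCommGroup E] [Module ℂ E] [PartialOrder A] [SMul Aᵐᵒᵖ E] [Norm A] [Norm E]
    extends Inner A E where
  inner_add_right {x} {y} {z} : inner x (y + z) = inner x y + inner x z
  inner_self_nonneg {x} : 0 ≤ inner x x
  inner_self {x} : inner x x = 0 ↔ x = 0
  inner_op_smul_right {a : A} {x y : E} : inner x (y <• a) = inner x y * a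
  inner_smul_right_complex {z : ℂ} {x} {y} : inner x (z • y) = z • inner x y
  star_inner x y : star (inner x y) = inner y x
  norm_eq_sqrt_norm_inner_self x : ‖x‖ = √‖inner x x‖

section Aux

variable {A : Type*} [NonUnitalCStarAlgebra A] [PartialOrder A] [StarOrderedRing A]

/-- Key order-theoretic lemma in a unital C⋆-algebra: if `‖b* p b‖ ≤ c‖b* q b‖` for all `b`,
then `p ≤ c • q`. -/
private lemma key_eps' {B : Type*} [CStarAlgebra B] [PartialOrder B] [StarOrderedRing B]
    {p q : B} (hp : 0 ≤ p) (hq : 0 ≤ q) {c ε : ℝ} (hc : 0 ≤ c) (hε : 0 < ε)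
    (h : ∀ b : B, ‖star b * p * b‖ ≤ c * ‖star b * q * b‖) :
    p ≤ c • q + (c * ε) • 1 := by
  have hq' : IsSelfAdjoint q := .of_nonneg hq
  have hsp : ∀ t ∈ spectrum ℝ q, 0 ≤ t := fun t ht => spectrum_nonneg_of_nonneg hq ht
  set f : ℝ → ℝ := fun t => (Real.sqrt (t + ε))⁻¹ with hfdef
  set w : ℝ → ℝ := fun t => Real.sqrt (t + ε) with hwdef
  have hwc : ContinuousOn w (spectrum ℝ q) :=
    (Real.continuous_sqrt.comp (continuous_id.add continuous_const)).continuousOn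
  have hwne : ∀ t ∈ spectrum ℝ q, w t ≠ 0 := fun t ht =>
    ne_of_gt <| Real.sqrt_pos.2 (by linarith [hsp t ht])
  have hfc : ContinuousOn f (spectrum ℝ q) := hwc.inv₀ hwne
  set R := cfc f q with hRdef
  set W := cfc w q with hWdef
  have hRsa : IsSelfAdjoint R := cfc_predicate f q
  have hWsa : IsSelfAdjoint W := cfc_predicate w q
  have hRqR : R * q * R = cfc (fun t => f t * t * f t) q := by
    conv_lhs => rw [← cfc_id ℝ q hq']
    rw [← cfc_mul f id q hfc (continuousOn_id), ← cfc_mul (fun x => f x * id x) f q (hfc.mul continuousOn_id) hfc]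
    exact cfc_congr fun t _ => rfl
  have hRqR_norm : ‖R * q * R‖ ≤ 1 := by
    rw [hRqR]
    refine norm_cfc_le zero_le_one fun t ht => ?_
    have ht0 := hsp t ht
    have hs : Real.sqrt (t + ε) * Real.sqrt (t + ε) = t + ε := Real.mul_self_sqrt (by linarith)
    have hval : f t * t * f t = t / (t + ε) := by
      simp only [hfdef]
      rw [mul_comm _ t, mul_assoc, ← mul_inv, hs, div_eq_mul_inv]
    rw [Real.norm_eq_abs, hval, abs_of_nonneg (by positivity)]
    exact div_le_one_of_le₀ (by linarith) (by linarith)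
  have hRpR_nonneg : 0 ≤ R * p * R := by
    simpa [hRsa.star_eq] using star_left_conjugate_nonneg hp R
  have hRpR_norm : ‖R * p * R‖ ≤ c := by
    calc ‖R * p * R‖ = ‖star R * p * R‖ := by rw [hRsa.star_eq]
      _ ≤ c * ‖star R * q * R‖ := h R
      _ = c * ‖R * q * R‖ := by rw [hRsa.star_eq]
      _ ≤ c * 1 := mul_le_mul_of_nonneg_left hRqR_norm hc
      _ = c := mul_one c
  have hRpR_le : R * p * R ≤ c • 1 := by
    calc R * p * R ≤ algebraMap ℝ B ‖R * p * R‖ :=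
          IsSelfAdjoint.le_algebraMap_norm_self (.of_nonneg hRpR_nonneg)
      _ ≤ c • 1 := by
          rw [Algebra.algebraMap_eq_smul_one, ← sub_nonneg, ← sub_smul]
          exact smul_nonneg (by linarith) zero_le_one
  have hWR : W * R = 1 := by
    rw [hWdef, hRdef, ← cfc_mul w f q hwc hfc, ← cfc_one (R := ℝ) q hq']
    exact cfc_congr fun t ht => mul_inv_cancel₀ (hwne t ht)
  have hRW : R * W = 1 := by
    rw [hWdef, hRdef, ← cfc_mul f w q hfc hwc, ← cfc_one (R := ℝ) q hq']
    exact cfc_congr fun t ht => inv_mul_cancel₀ (hwne t ht)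
  have hWW : W * W = q + ε • 1 := by
    rw [hWdef, ← cfc_mul w w q hwc hwc]
    have h1 : cfc (fun t => w t * w t) q = cfc (fun t : ℝ => id t + (fun _ : ℝ => ε) t) q :=
      cfc_congr fun t ht => by
        simp only [hwdef, id_eq]
        exact Real.mul_self_sqrt (by linarith [hsp t ht])
    rw [h1, cfc_add q id (fun _ : ℝ => ε) continuousOn_id continuousOn_const,
      cfc_id ℝ q hq', cfc_const ε q hq', Algebra.algebraMap_eq_smul_one]
  have hconj : W * (R * p * R) * W ≤ W * (c • 1) * W := by
    have := star_left_conjugate_le_conjugate hRpR_le W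
    rwa [hWsa.star_eq] at this
  have hlhs : W * (R * p * R) * W = p := by
    simp only [mul_assoc]
    rw [hRW, mul_one, ← mul_assoc, hWR, one_mul]
  have hrhs : W * (c • 1) * W = c • q + (c * ε) • 1 := by
    rw [mul_smul_comm, mul_one, smul_mul_assoc, hWW, smul_add, smul_smul]
  rwa [hlhs, hrhs] at hconj

private lemma key' {B : Type*} [CStarAlgebra B] [PartialOrder B] [StarOrderedRing B]
    {p q : B} (hp : 0 ≤ p) (hq : 0 ≤ q) {c : ℝ} (hc : 0 ≤ c)
    (h : ∀ b : B, ‖star b * p * b‖ ≤ c * ‖star b * q * b‖) : p ≤ c • q := by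
  have hcl : IsClosed {x : B | p ≤ x} := isClosed_le continuous_const continuous_id
  have hcont : Continuous (fun ε : ℝ => c • q + (c * ε) • 1) := by continuity
  have hlim : Filter.Tendsto (fun ε : ℝ => c • q + (c * ε) • 1)
      (nhdsWithin 0 (Set.Ioi 0)) (nhds (c • q)) := by
    simpa using (hcont.tendsto 0).mono_left nhdsWithin_le_nhds
  exact hcl.mem_of_tendsto hlim <|
    eventually_mem_nhdsWithin.mono fun ε hε => key_eps' hp hq hc hε h

variable {K : Type*} [NormedAddCommGroup K] [NormedSpace ℂ K] [SMul Aᵐᵒᵖ K] [CStarModuleRight A K]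

local notation "⟪" x ", " y "⟫" => inner (𝕜 := A) x y

namespace CStarModuleRight

lemma inner_add_left {x y z : K} : ⟪x + y, z⟫ = ⟪x, z⟫ + ⟪y, z⟫ := by
  rw [← CStarModuleRight.star_inner z (x + y), CStarModuleRight.inner_add_right, star_add,
    CStarModuleRight.star_inner, CStarModuleRight.star_inner]

lemma inner_sub_right {x y z : K} : ⟪x, y - z⟫ = ⟪x, y⟫ - ⟪x, z⟫ := by
  rw [eq_sub_iff_add_eq, ← CStarModuleRight.inner_add_right, sub_add_cancel]

lemma inner_smul_left_complex {c : ℂ} {x y : K} : ⟪c • x, y⟫ = star c • ⟪x, y⟫ := by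
  rw [← CStarModuleRight.star_inner y (c • x), CStarModuleRight.inner_smul_right_complex,
    star_smul, CStarModuleRight.star_inner]

lemma inner_op_smul_left {a : A} {x y : K} : ⟪x <• a, y⟫ = star a * ⟪x, y⟫ := by
  rw [← CStarModuleRight.star_inner y (x <• a), CStarModuleRight.inner_op_smul_right,
    star_mul, CStarModuleRight.star_inner]

lemma isSelfAdjoint_inner_self {x : K} : IsSelfAdjoint ⟪x, x⟫ :=
  CStarModuleRight.star_inner x x

lemma norm_sq_eq {x : K} : ‖x‖ ^ 2 = ‖⟪x, x⟫‖ := by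
  rw [CStarModuleRight.norm_eq_sqrt_norm_inner_self (A := A) x, Real.sq_sqrt (norm_nonneg _)]

end CStarModuleRight

private lemma ext_left' {u v : K} (h : ∀ e : K, ⟪e, u⟫ = ⟪e, v⟫) : u = v := by
  have h2 : ⟪u - v, u - v⟫ = 0 := by
    rw [CStarModuleRight.inner_sub_right, h (u - v), sub_self]
  exact sub_eq_zero.mp (CStarModuleRight.inner_self.mp h2)

private lemma conj_inner' (w : K) (lam : ℂ) (x : A) :
    ((⟪lam • w + w <• x, lam • w + w <• x⟫ : A) : Unitization ℂ A)
      = star (Unitization.inl lam + (x : Unitization ℂ A)) * ((⟪w, w⟫ : A) : Unitization ℂ A)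
          * (Unitization.inl lam + (x : Unitization ℂ A)) := by
  simp only [CStarModuleRight.inner_add_left, CStarModuleRight.inner_add_right,
    CStarModuleRight.inner_smul_left_complex, CStarModuleRight.inner_smul_right_complex,
    CStarModuleRight.inner_op_smul_left, CStarModuleRight.inner_op_smul_right,
    star_add, Unitization.inr_add, Unitization.inr_mul, Unitization.inr_smul,
    mul_add, add_mul, Unitization.inl_star, Unitization.inr_star]
  simp only [← Unitization.inr_star, ← Unitization.inr_mul]
  simp only [Unitization.inl_mul_inr, Unitization.inr_mul_inl,
    smul_mul_assoc, mul_smul_comm, Unitization.inr_smul, smul_smul, Unitization.inr_mul]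
  simp only [← Unitization.algebraMap_eq_inl, ← algebraMap_star_comm, ← Algebra.commutes,
    ← Algebra.smul_def]
  simp only [smul_add, smul_mul_assoc]

private lemma adj_lin' {E : Type*} [NormedAddCommGroup E] [NormedSpace ℂ E] [SMul Aᵐᵒᵖ E]
    [CStarModuleRight A E] (T : E → K) (Tadj : K → E)
    (hT : ∀ (x : E) (y : K), ⟪T x, y⟫ = ⟪x, Tadj y⟫) (z : K) (lam : ℂ) (x : A) :
    Tadj (lam • z + z <• x) = lam • Tadj z + (Tadj z) <• x := by
  refine ext_left' (A := A) fun e => ?_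
  rw [← hT, CStarModuleRight.inner_add_right, CStarModuleRight.inner_smul_right_complex,
    CStarModuleRight.inner_op_smul_right, hT, ← CStarModuleRight.inner_op_smul_right,
    ← CStarModuleRight.inner_smul_right_complex, ← CStarModuleRight.inner_add_right]

end Aux

/-- **Corollary 2.5.** Let `E, H, K` be Hilbert `A`-modules, `T ∈ L(E,K)` and `T' ∈ L(H,K)`
adjointable operators.  Then `T' (T')* ≤ λ • T T*` for some `λ > 0` if and only if there exists
`μ > 0` such that `‖(T')* z‖ ≤ μ * ‖T* z‖` for all `z ∈ K`. -/
theorem exists_smul_inner_le_iff_exists_norm_le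
    {A : Type*} [NonUnitalCStarAlgebra A] [PartialOrder A] [StarOrderedRing A]
    {E H K : Type*}
    [NormedAddCommGroup E] [NormedSpace ℂ E] [SMul Aᵐᵒᵖ E] [CStarModuleRight A E] [CompleteSpace E]
    [NormedAddCommGroup H] [NormedSpace ℂ H] [SMul Aᵐᵒᵖ H] [CStarModuleRight A H] [CompleteSpace H]
    [NormedAddCommGroup K] [NormedSpace ℂ K] [SMul Aᵐᵒᵖ K] [CStarModuleRight A K] [CompleteSpace K]
    (T : E → K) (Tadj : K → E)
    (hT : ∀ (x : E) (y : K), inner (𝕜 := A) (T x) y = inner A x (Tadj y))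
    (T' : H → K) (T'adj : K → H)
    (hT' : ∀ (x : H) (y : K), inner (𝕜 := A) (T' x) y = inner A x (T'adj y)) :
    (∃ lam : ℝ, 0 < lam ∧
        ∀ z : K, inner (𝕜 := A) (T' (T'adj z)) z ≤ lam • inner A (T (Tadj z)) z) ↔
      (∃ mu : ℝ, 0 < mu ∧ ∀ z : K, ‖T'adj z‖ ≤ mu * ‖Tadj z‖) := by
  constructor
  · rintro ⟨lam, hlam, hle⟩
    refine ⟨Real.sqrt lam, Real.sqrt_pos.2 hlam, fun z => ?_⟩
    have h := hle z
    rw [hT' (T'adj z) z, hT (Tadj z) z] at h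
    have hp : (0 : A) ≤ inner (𝕜 := A) (T'adj z) (T'adj z) := CStarModuleRight.inner_self_nonneg
    have hnorm : ‖inner (𝕜 := A) (T'adj z) (T'adj z)‖
        ≤ lam * ‖inner (𝕜 := A) (Tadj z) (Tadj z)‖ := by
      calc ‖inner (𝕜 := A) (T'adj z) (T'adj z)‖
          ≤ ‖lam • inner (𝕜 := A) (Tadj z) (Tadj z)‖ :=
            CStarAlgebra.norm_le_norm_of_nonneg_of_le hp h
        _ = lam * ‖inner (𝕜 := A) (Tadj z) (Tadj z)‖ := by
            rw [norm_smul, Real.norm_of_nonneg hlam.le]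
    calc ‖T'adj z‖ = Real.sqrt ‖inner (𝕜 := A) (T'adj z) (T'adj z)‖ :=
          CStarModuleRight.norm_eq_sqrt_norm_inner_self _
      _ ≤ Real.sqrt (lam * ‖inner (𝕜 := A) (Tadj z) (Tadj z)‖) := Real.sqrt_le_sqrt hnorm
      _ = Real.sqrt lam * Real.sqrt ‖inner (𝕜 := A) (Tadj z) (Tadj z)‖ :=
          Real.sqrt_mul hlam.le _
      _ = Real.sqrt lam * ‖Tadj z‖ := by rw [← CStarModuleRight.norm_eq_sqrt_norm_inner_self]
  · rintro ⟨mu, hmu, hle⟩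
    refine ⟨mu ^ 2, by positivity, fun z => ?_⟩
    rw [hT' (T'adj z) z, hT (Tadj z) z]
    set p : A := inner (𝕜 := A) (T'adj z) (T'adj z) with hpdef
    set q : A := inner (𝕜 := A) (Tadj z) (Tadj z) with hqdef
    have hpsa : IsSelfAdjoint p := CStarModuleRight.isSelfAdjoint_inner_self
    have hqsa : IsSelfAdjoint q := CStarModuleRight.isSelfAdjoint_inner_self
    have hp : (0 : A) ≤ p := CStarModuleRight.inner_self_nonneg
    have hq : (0 : A) ≤ q := CStarModuleRight.inner_self_nonneg
    rw [← Unitization.inr_le_iff p (mu ^ 2 • q) hpsa (IsSelfAdjoint.smul (star_trivial (mu ^ 2 : ℝ)) hqsa)]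
    rw [Unitization.inr_smul]
    refine key' (Unitization.inr_nonneg_iff.2 hp) (Unitization.inr_nonneg_iff.2 hq)
      (sq_nonneg mu) fun b => ?_
    set lam : ℂ := b.fst with hlamdef
    set x : A := b.snd with hxdef
    have hb : b = Unitization.inl lam + (x : Unitization ℂ A) :=
      (Unitization.inl_fst_add_inr_snd_eq b).symm
    set z' : K := lam • z + z <• x with hz'def
    have h1 : star b * (p : Unitization ℂ A) * b
        = ((inner (𝕜 := A) (T'adj z') (T'adj z') : A) : Unitization ℂ A) := by
      rw [hb, hpdef, ← conj_inner' (T'adj z) lam x, hz'def,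
        adj_lin' (A := A) T' T'adj hT' z lam x]
    have h2 : star b * (q : Unitization ℂ A) * b
        = ((inner (𝕜 := A) (Tadj z') (Tadj z') : A) : Unitization ℂ A) := by
      rw [hb, hqdef, ← conj_inner' (Tadj z) lam x, hz'def,
        adj_lin' (A := A) T Tadj hT z lam x]
    rw [h1, h2, Unitization.norm_inr, Unitization.norm_inr,
      ← CStarModuleRight.norm_sq_eq, ← CStarModuleRight.norm_sq_eq]
    calc ‖T'adj z'‖ ^ 2 ≤ (mu * ‖Tadj z'‖) ^ 2 := by
          have := hle z'
          have h0 : (0:ℝ) ≤ ‖T'adj z'‖ := norm_nonneg _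
          nlinarith
      _ = mu ^ 2 * ‖Tadj z'‖ ^ 2 := by ring
end

section
/- Let E, H and K be Hilbert 𝔄-modules, and let T ∈ L(E, K) and T′ ∈ L(H, K) be such that ‖(T′)*z‖ ≤ μ ‖T*z‖ for all z ∈ K, where μ > 0. Then there exists a unique bounded 𝔄-linear map V from the norm closure of R(T*) (a closed submodule of E) to H such that V(T*z) = (T′)*z for all z ∈ K, and this V satisfies ‖V‖ ≤ μ. -/
open scoped RightActions

section Aux

variable {A : Type*} [NonUnitalCStarAlgebra A] [PartialOrder A] [StarOrderedRing A]
  {E : Type*} [NormedAddCommGroup E] [NormedSpace ℂ E] [SMul Aᵐᵒᵖ E] [CStarModuleRight A E]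

local notation "⟪" x ", " y "⟫" => inner (𝕜 := A) x y

lemma CStarModuleRight.inner_sub_right_s9 {x y z : E} : ⟪x, y - z⟫ = ⟪x, y⟫ - ⟪x, z⟫ := by
  rw [eq_sub_iff_add_eq, ← CStarModuleRight.inner_add_right, sub_add_cancel]

lemma CStarModuleRight.inner_op_smul_left_s9 {a : A} {x y : E} : ⟪x <• a, y⟫ = star a * ⟪x, y⟫ := by
  rw [← CStarModuleRight.star_inner y (x <• a), CStarModuleRight.inner_op_smul_right, star_mul,
    CStarModuleRight.star_inner]

lemma CStarModuleRight.norm_sq_eq_s9 {x : E} : ‖x‖ ^ 2 = ‖⟪x, x⟫‖ := by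
  rw [CStarModuleRight.norm_eq_sqrt_norm_inner_self (A := A) x, Real.sq_sqrt (norm_nonneg _)]

lemma my_ext_inner_left {u v : E} (h : ∀ z : E, ⟪z, u⟫ = ⟪z, v⟫) : u = v := by
  have h0 : ⟪u - v, u - v⟫ = 0 := by
    rw [CStarModuleRight.inner_sub_right_s9, h (u - v), sub_self]
  exact sub_eq_zero.mp (CStarModuleRight.inner_self.mp h0)

lemma my_op_smul_sub (a : A) (u v : E) : (u - v) <• a = u <• a - v <• a := by
  refine my_ext_inner_left (A := A) fun z => ?_
  simp [sub_mul, CStarModuleRight.inner_op_smul_right, CStarModuleRight.inner_sub_right_s9]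

lemma my_norm_op_smul_le (a : A) (u : E) : ‖u <• a‖ ≤ ‖u‖ * ‖a‖ := by
  have h1 : ‖u <• a‖ ^ 2 ≤ (‖u‖ * ‖a‖) ^ 2 := by
    rw [CStarModuleRight.norm_sq_eq_s9 (A := A)]
    have h2 : ⟪u <• a, u <• a⟫ = star a * ⟪u, u⟫ * a := by
      rw [CStarModuleRight.inner_op_smul_right, CStarModuleRight.inner_op_smul_left_s9, mul_assoc]
    rw [h2]
    calc ‖star a * ⟪u, u⟫ * a‖ ≤ ‖star a‖ * ‖⟪u, u⟫‖ * ‖a‖ :=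
          (norm_mul_le _ _).trans (by gcongr; exact norm_mul_le _ _)
      _ = ‖u‖ ^ 2 * ‖a‖ ^ 2 := by rw [norm_star, ← CStarModuleRight.norm_sq_eq_s9]; ring
      _ = (‖u‖ * ‖a‖) ^ 2 := by ring
  have hn : (0:ℝ) ≤ ‖u‖ * ‖a‖ := mul_nonneg (norm_nonneg _) (norm_nonneg _)
  nlinarith [norm_nonneg (u <• a)]

lemma my_lipschitz_op_smul (a : A) :
    LipschitzWith ‖a‖₊ (fun u : E => u <• a) := by
  refine LipschitzWith.of_dist_le_mul fun u v => ?_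
  rw [dist_eq_norm, dist_eq_norm, ← my_op_smul_sub]
  calc ‖(u - v) <• a‖ ≤ ‖u - v‖ * ‖a‖ := my_norm_op_smul_le a _
    _ = (‖a‖₊ : ℝ) * ‖u - v‖ := by rw [mul_comm]; rfl

end Aux

/-- From Remark 2.6:  let `T ∈ L(E,K)` and `T' ∈ L(H,K)` be adjointable operators between
Hilbert `A`-modules such that `‖(T')* z‖ ≤ μ * ‖T* z‖` for all `z ∈ K`, where `μ > 0`.
Then there is a unique bounded `A`-linear map `V` from the norm closure `G` of the range of
`T*` to `H` with `V (T* z) = (T')* z` for all `z ∈ K`, and this `V` satisfies `‖V‖ ≤ μ`. -/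
theorem exists_unique_extension_of_norm_adjoint_le
    {A : Type*} [NonUnitalCStarAlgebra A] [PartialOrder A] [StarOrderedRing A]
    {E H K : Type*}
    [NormedAddCommGroup E] [NormedSpace ℂ E] [SMul Aᵐᵒᵖ E] [CStarModuleRight A E] [CompleteSpace E]
    [NormedAddCommGroup H] [NormedSpace ℂ H] [SMul Aᵐᵒᵖ H] [CStarModuleRight A H] [CompleteSpace H]
    [NormedAddCommGroup K] [NormedSpace ℂ K] [SMul Aᵐᵒᵖ K] [CStarModuleRight A K] [CompleteSpace K]
    (T : E →L[ℂ] K) (Tadj : K →L[ℂ] E)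
    (hT : ∀ (x : E) (y : K), inner (𝕜 := A) (T x) y = inner A x (Tadj y))
    (T' : H →L[ℂ] K) (T'adj : K →L[ℂ] H)
    (hT' : ∀ (x : H) (y : K), inner (𝕜 := A) (T' x) y = inner A x (T'adj y))
    (mu : ℝ) (hmu : 0 < mu) (h : ∀ z : K, ‖T'adj z‖ ≤ mu * ‖Tadj z‖) :
    ∃ V : (LinearMap.range (Tadj : K →ₗ[ℂ] E)).topologicalClosure →L[ℂ] H,
      ((∀ z : K, V ⟨Tadj z, Submodule.le_topologicalClosure _ (LinearMap.mem_range_self _ z)⟩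
            = T'adj z) ∧
        (∀ (a : A) (x y : (LinearMap.range (Tadj : K →ₗ[ℂ] E)).topologicalClosure),
          (y : E) = (x : E) <• a → V y = V x <• a) ∧
        ‖V‖ ≤ mu) ∧
      ∀ W : (LinearMap.range (Tadj : K →ₗ[ℂ] E)).topologicalClosure →L[ℂ] H,
        ((∀ z : K, W ⟨Tadj z, Submodule.le_topologicalClosure _ (LinearMap.mem_range_self _ z)⟩
            = T'adj z) ∧
          (∀ (a : A) (x y : (LinearMap.range (Tadj : K →ₗ[ℂ] E)).topologicalClosure),
            (y : E) = (x : E) <• a → W y = W x <• a)) → W = V := by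
  classical
  set f : K →ₗ[ℂ] E := (Tadj : K →ₗ[ℂ] E) with hf
  set p : Submodule ℂ E := LinearMap.range f with hp
  set G : Submodule ℂ E := p.topologicalClosure with hGdef
  -- adjoint maps are A-linear
  have hTa : ∀ (a : A) (z : K), Tadj (z <• a) = Tadj z <• a := by
    intro a z
    refine my_ext_inner_left (A := A) fun x => ?_
    rw [← hT, CStarModuleRight.inner_op_smul_right, CStarModuleRight.inner_op_smul_right, hT]
  have hT'a : ∀ (a : A) (z : K), T'adj (z <• a) = T'adj z <• a := by
    intro a z
    refine my_ext_inner_left (A := A) fun x => ?_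
    rw [← hT', CStarModuleRight.inner_op_smul_right, CStarModuleRight.inner_op_smul_right, hT']
  -- kernel inclusion
  have hker : LinearMap.ker f ≤ LinearMap.ker (T'adj : K →ₗ[ℂ] H) := by
    intro z hz
    have hz' : Tadj z = 0 := hz
    have hle := h z
    rw [hz', norm_zero, mul_zero] at hle
    exact norm_le_zero_iff.mp hle
  -- the linear map on the range
  set V₀ : p →ₗ[ℂ] H :=
    (Submodule.liftQ (LinearMap.ker f) (T'adj : K →ₗ[ℂ] H) hker).comp
      (f.quotKerEquivRange.symm : p →ₗ[ℂ] K ⧸ LinearMap.ker f) with hV₀def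
  have hV₀ : ∀ (z : K) (hz : Tadj z ∈ p), V₀ ⟨Tadj z, hz⟩ = T'adj z := by
    intro z hz
    have h1 : f.quotKerEquivRange.symm ⟨f z, LinearMap.mem_range_self f z⟩
        = (LinearMap.ker f).mkQ z := f.quotKerEquivRange_symm_apply_image z _
    have h2 : V₀ ⟨Tadj z, hz⟩
        = Submodule.liftQ (LinearMap.ker f) (T'adj : K →ₗ[ℂ] H) hker
            (f.quotKerEquivRange.symm ⟨f z, LinearMap.mem_range_self f z⟩) := rfl
    rw [h2, h1]
    rfl
  have hbound : ∀ x : p, ‖V₀ x‖ ≤ mu * ‖x‖ := by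
    rintro ⟨y, hy⟩
    obtain ⟨z, rfl⟩ := hy
    have h3 : V₀ ⟨f z, ⟨z, rfl⟩⟩ = T'adj z := hV₀ z ⟨z, rfl⟩
    show ‖V₀ ⟨f z, ⟨z, rfl⟩⟩‖ ≤ mu * ‖(⟨f z, ⟨z, rfl⟩⟩ : p)‖
    rw [h3]
    simpa [hf] using h z
  set V₀c : p →L[ℂ] H := V₀.mkContinuous mu hbound with hV₀cdef
  -- the inclusion of p into G
  set e : p →L[ℂ] G :=
    LinearMap.mkContinuous (Submodule.inclusion p.le_topologicalClosure) 1
      (fun x => by simpa using le_refl ‖(x : E)‖) with hedef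
  have h_e_norm : ∀ x : p, ‖x‖ ≤ ((1 : NNReal) : ℝ) * ‖e x‖ := by
    intro x
    simp only [NNReal.coe_one, one_mul]
    exact le_refl _
  have h_dense : DenseRange e := by
    intro y
    rw [closure_subtype]
    have himg : ((↑) '' Set.range e : Set E) = (p : Set E) := by
      ext w
      constructor
      · rintro ⟨g, ⟨x, rfl⟩, rfl⟩
        exact x.2
      · intro hw
        exact ⟨e ⟨w, hw⟩, ⟨⟨w, hw⟩, rfl⟩, rfl⟩
    rw [himg]
    exact y.2
  set hUI := (ContinuousLinearMap.isUniformEmbedding_of_bound e h_e_norm).isUniformInducing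
    with hUIdef
  set V : G →L[ℂ] H := V₀c.extend e with hVdef
  -- key evaluation property with arbitrary membership proof
  have hVval : ∀ (z : K) (hz : Tadj z ∈ G), V ⟨Tadj z, hz⟩ = T'adj z := by
    intro z hz
    have h1 : (⟨Tadj z, hz⟩ : G) = e ⟨Tadj z, LinearMap.mem_range_self f z⟩ := rfl
    rw [h1, hVdef, ContinuousLinearMap.extend_eq (h_dense := h_dense) (h_e := hUI)]
    exact hV₀ z _
  -- G is closed under the right action
  have hGsmul : ∀ (a : A) (x : G), ((x : E) <• a) ∈ G := by
    intro a x
    have hmaps : Set.MapsTo (fun w : E => w <• a) (p : Set E) (p : Set E) := by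
      rintro w ⟨z, rfl⟩
      exact ⟨z <• a, hTa a z⟩
    have hx : (x : E) ∈ closure (p : Set E) := x.2
    exact hmaps.closure (my_lipschitz_op_smul a).continuous hx
  -- the module property
  have hmod : ∀ (a : A) (x y : G), (y : E) = (x : E) <• a → V y = V x <• a := by
    intro a x y hy
    have hyx : y = ⟨(x : E) <• a, hGsmul a x⟩ := Subtype.ext hy
    subst hyx
    -- prove by density
    have key : ∀ x : G, V ⟨(x : E) <• a, hGsmul a x⟩ = V x <• a := by
      have hc1 : Continuous fun x : G => V ⟨(x : E) <• a, hGsmul a x⟩ := by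
        exact V.continuous.comp (Continuous.subtype_mk
          ((my_lipschitz_op_smul a).continuous.comp continuous_subtype_val) _)
      have hc2 : Continuous fun x : G => V x <• a :=
        (my_lipschitz_op_smul a).continuous.comp V.continuous
      refine fun x => congrFun (Continuous.ext_on h_dense hc1 hc2 ?_) x
      rintro _ ⟨w, rfl⟩
      set x : ↥G := e w with hx
      obtain ⟨z, hz⟩ := w.2
      have hcoe : (x : E) = Tadj z := hz.symm
      have hval : (x : E) <• a = Tadj (z <• a) := by rw [hTa a z, hcoe]
      have hmem : Tadj (z <• a) ∈ G := hval ▸ hGsmul a x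
      have h2 : (⟨(x : E) <• a, hGsmul a x⟩ : ↥G) = ⟨Tadj (z <• a), hmem⟩ := Subtype.ext hval
      have h3 : x = ⟨Tadj z, hcoe ▸ x.2⟩ := Subtype.ext hcoe
      show V ⟨(x : E) <• a, hGsmul a x⟩ = V x <• a
      rw [h2, hVval (z <• a) hmem, hT'a a z, h3, hVval z _]
    exact key x
  -- norm bound
  have hnorm : ‖V‖ ≤ mu := by
    have h1 := ContinuousLinearMap.opNorm_extend_le V₀c h_dense h_e_norm
    have h2 : ‖V₀c‖ ≤ mu := V₀.mkContinuous_norm_le hmu.le hbound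
    calc ‖V‖ ≤ ((1:NNReal) : ℝ) * ‖V₀c‖ := h1
      _ = ‖V₀c‖ := by simp
      _ ≤ mu := h2
  refine ⟨V, ⟨fun z => hVval z _, hmod, hnorm⟩, ?_⟩
  rintro W ⟨hW1, _⟩
  refine ContinuousLinearMap.coeFn_injective (Continuous.ext_on h_dense W.continuous V.continuous ?_)
  rintro _ ⟨w, rfl⟩
  set x : ↥G := e w with hx
  obtain ⟨z, hz⟩ := w.2
  have hcoe : (x : E) = Tadj z := hz.symm
  have h3 : x = ⟨Tadj z, hcoe ▸ x.2⟩ := Subtype.ext hcoe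
  show W x = V x
  rw [h3, hVval z _]
  exact hW1 z
end

section
/- Let E and K be Hilbert 𝔄-modules and T ∈ L(E, K), and suppose that the norm closure of R(T*) is orthogonally complemented in E. Then for every Hilbert 𝔄-module H and every T′ ∈ L(H, K) with R(T′) ⊆ R(T), the equation T′ = TX has a solution X ∈ L(H, E). -/
open scoped RightActions

/-- The December 2024 Mathlib `CStarModule` (right `A`-module, `A`-linear in the second
argument via the right action `y <• a`), restated under a new name since Mathlib's
`CStarModule` now uses a left action. -/
class RightCStarModule (A : outParam <| Type*) (E : Type*) [NonUnitalSemiring A] [StarRing A]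
    [Module ℂ A] [AddCommGroup E] [Module ℂ E] [PartialOrder A] [SMul Aᵐᵒᵖ E] [Norm A] [Norm E]
    extends Inner A E where
  inner_add_right {x} {y} {z} : inner x (y + z) = inner x y + inner x z
  inner_self_nonneg {x} : 0 ≤ inner x x
  inner_self {x} : inner x x = 0 ↔ x = 0
  inner_op_smul_right {a : A} {x y : E} : inner x (y <• a) = inner x y * a
  inner_smul_right_complex {z : ℂ} {x} {y} : inner x (z • y) = z • inner x y
  star_inner x y : star (inner x y) = inner y x
  norm_eq_sqrt_norm_inner_self x : ‖x‖ = √‖inner x x‖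

namespace RightCStarModule

section general

variable {A E : Type*} [NonUnitalCStarAlgebra A] [PartialOrder A] [StarOrderedRing A]
  [NormedAddCommGroup E] [NormedSpace ℂ E] [SMul Aᵐᵒᵖ E] [RightCStarModule A E]

lemma inner_add_left {x y z : E} :
    inner (𝕜 := A) (x + y) z = inner (𝕜 := A) x z + inner (𝕜 := A) y z := by
  rw [← star_inner z (x + y), inner_add_right, star_add, star_inner, star_inner]

@[simp]
lemma inner_zero_right {x : E} : inner (𝕜 := A) x 0 = 0 := by
  simpa using inner_smul_right_complex (A := A) (z := 0) (x := x) (y := 0)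

@[simp]
lemma inner_zero_left {x : E} : inner (𝕜 := A) 0 x = 0 := by
  rw [← star_inner x 0, inner_zero_right, star_zero]

lemma inner_sub_right {x y z : E} :
    inner (𝕜 := A) x (y - z) = inner (𝕜 := A) x y - inner (𝕜 := A) x z := by
  rw [sub_eq_add_neg, ← neg_one_smul ℂ z, inner_add_right, inner_smul_right_complex,
    neg_one_smul, sub_eq_add_neg]

lemma inner_sub_left {x y z : E} :
    inner (𝕜 := A) (x - y) z = inner (𝕜 := A) x z - inner (𝕜 := A) y z := by
  rw [← star_inner z (x - y), inner_sub_right, star_sub, star_inner, star_inner]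

lemma inner_smul_left_complex {c : ℂ} {x y : E} :
    inner (𝕜 := A) (c • x) y = star c • inner (𝕜 := A) x y := by
  rw [← star_inner y (c • x), inner_smul_right_complex, star_smul, star_inner]

lemma inner_op_smul_left {a : A} {x y : E} :
    inner (𝕜 := A) (x <• a) y = star a * inner (𝕜 := A) x y := by
  rw [← star_inner y (x <• a), inner_op_smul_right, star_mul, star_inner]

lemma inner_smul_right_real {r : ℝ} {x y : E} :
    inner (𝕜 := A) x (r • y) = r • inner (𝕜 := A) x y := by
  have h₁ : r • y = (r : ℂ) • y := by simp
  rw [h₁, inner_smul_right_complex]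
  simp

lemma inner_smul_left_real {r : ℝ} {x y : E} :
    inner (𝕜 := A) (r • x) y = r • inner (𝕜 := A) x y := by
  rw [← star_inner y (r • x), inner_smul_right_real, star_smul, star_inner, star_trivial]

lemma norm_sq_eq {x : E} : ‖x‖ ^ 2 = ‖inner (𝕜 := A) x x‖ := by
  rw [norm_eq_sqrt_norm_inner_self (A := A) x, Real.sq_sqrt (norm_nonneg _)]

lemma inner_mul_inner_swap_le {x y : E} :
    inner (𝕜 := A) y x * inner (𝕜 := A) x y ≤ ‖x‖ ^ 2 • inner (𝕜 := A) y y := by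
  rcases eq_or_ne x 0 with h | h
  · simp [h, inner_zero_left, inner_zero_right]
  · have h₁ : ∀ (a : A),
        (0 : A) ≤ ‖x‖ ^ 2 • (star a * a) - ‖x‖ ^ 2 • (star a * inner (𝕜 := A) x y)
                  - ‖x‖ ^ 2 • (inner (𝕜 := A) y x * a)
                  + ‖x‖ ^ 2 • (‖x‖ ^ 2 • inner (𝕜 := A) y y) := fun a => by
      calc (0 : A) ≤ inner (𝕜 := A) (x <• a - ‖x‖ ^ 2 • y) (x <• a - ‖x‖ ^ 2 • y) := by
                      exact inner_self_nonneg
            _ = star a * inner (𝕜 := A) x x * a - ‖x‖ ^ 2 • (star a * inner (𝕜 := A) x y)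
                  - ‖x‖ ^ 2 • (inner (𝕜 := A) y x * a)
                  + ‖x‖ ^ 2 • (‖x‖ ^ 2 • inner (𝕜 := A) y y) := by
                      simp only [inner_sub_right, inner_op_smul_right, inner_sub_left,
                        inner_op_smul_left, inner_smul_left_real, mul_sub, sub_mul, mul_smul_comm,
                        smul_mul_assoc, inner_smul_right_real, smul_sub, mul_assoc]
                      abel
            _ ≤ ‖x‖ ^ 2 • (star a * a) - ‖x‖ ^ 2 • (star a * inner (𝕜 := A) x y)
                  - ‖x‖ ^ 2 • (inner (𝕜 := A) y x * a)
                  + ‖x‖ ^ 2 • (‖x‖ ^ 2 • inner (𝕜 := A) y y) := by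
                      gcongr
                      calc _ ≤ ‖inner (𝕜 := A) x x‖ • (star a * a) :=
                          CStarAlgebra.star_left_conjugate_le_norm_smul (star_inner x x)
                        _ = ‖x‖ ^ 2 • (star a * a) := by rw [norm_sq_eq]
    specialize h₁ (inner (𝕜 := A) x y)
    simp only [star_inner, sub_self, zero_sub, le_neg_add_iff_add_le, add_zero] at h₁
    rwa [smul_le_smul_iff_of_pos_left (pow_pos (norm_pos_iff.mpr h) _)] at h₁

variable (E) in
lemma norm_inner_le {x y : E} : ‖inner (𝕜 := A) x y‖ ≤ ‖x‖ * ‖y‖ := by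
  have := calc ‖inner (𝕜 := A) x y‖ ^ 2
        = ‖inner (𝕜 := A) y x * inner (𝕜 := A) x y‖ := by
                rw [← star_inner x y, CStarRing.norm_star_mul_self, pow_two]
    _ ≤ ‖‖x‖ ^ 2 • inner (𝕜 := A) y y‖ := by
                refine CStarAlgebra.norm_le_norm_of_nonneg_of_le ?_ inner_mul_inner_swap_le
                rw [← star_inner x y]
                exact star_mul_self_nonneg _
    _ = ‖x‖ ^ 2 * ‖inner (𝕜 := A) y y‖ := by
                rw [norm_smul, Real.norm_of_nonneg (by positivity)]
    _ = (‖x‖ * ‖y‖) ^ 2 := by rw [← norm_sq_eq (x := y), mul_pow]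
  exact le_of_pow_le_pow_left₀ two_ne_zero (mul_nonneg (norm_nonneg _) (norm_nonneg _)) this

/-- The continuous map `y ↦ ⟪z, y⟫`. -/
noncomputable def innerSL (z : E) : E →L[ℂ] A :=
  LinearMap.mkContinuous
    { toFun := fun y => inner (𝕜 := A) z y
      map_add' := fun _ _ => inner_add_right
      map_smul' := fun c y => by rw [inner_smul_right_complex]; rfl } ‖z‖
    (fun _ => norm_inner_le E)

end general

end RightCStarModule

/-- **Theorem 3.2 ((i) ⟹ (ii)).**  Let `E, K` be Hilbert `A`-modules and `T ∈ L(E,K)` an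
adjointable operator such that the norm closure of the range of `T*` is orthogonally
complemented in `E`.  Then for every Hilbert `A`-module `H` and every adjointable
`T' ∈ L(H,K)` with `R(T') ⊆ R(T)`, the equation `T' = T X` has an adjointable solution
`X ∈ L(H,E)`. -/
theorem douglas_solvable_of_orthogonally_complemented
    {A : Type*} [NonUnitalCStarAlgebra A] [PartialOrder A] [StarOrderedRing A]
    {E K : Type*}
    [NormedAddCommGroup E] [NormedSpace ℂ E] [SMul Aᵐᵒᵖ E] [RightCStarModule A E] [CompleteSpace E]
    [NormedAddCommGroup K] [NormedSpace ℂ K] [SMul Aᵐᵒᵖ K] [RightCStarModule A K] [CompleteSpace K]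
    (T : E →L[ℂ] K) (Tadj : K →L[ℂ] E)
    (hT : ∀ (x : E) (y : K), inner (𝕜 := A) (T x) y = inner (𝕜 := A) x (Tadj y))
    (hcompl : ∀ x : E, ∃ y z : E,
      y ∈ (LinearMap.range (Tadj : K →ₗ[ℂ] E)).topologicalClosure ∧
      (∀ w ∈ (LinearMap.range (Tadj : K →ₗ[ℂ] E)).topologicalClosure,
        inner (𝕜 := A) z w = 0) ∧
      x = y + z)
    {H : Type*}
    [NormedAddCommGroup H] [NormedSpace ℂ H] [SMul Aᵐᵒᵖ H] [RightCStarModule A H] [CompleteSpace H]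
    (T' : H →L[ℂ] K) (T'adj : K →L[ℂ] H)
    (hT' : ∀ (x : H) (y : K), inner (𝕜 := A) (T' x) y = inner (𝕜 := A) x (T'adj y))
    (hrange : Set.range T' ⊆ Set.range T) :
    ∃ X : H →L[ℂ] E,
      (∃ Xadj : E →L[ℂ] H, ∀ (x : H) (y : E),
        inner (𝕜 := A) (X x) y = inner (𝕜 := A) x (Xadj y)) ∧
      ∀ h : H, T' h = T (X h) := by
  classical
  set R := LinearMap.range (Tadj : K →ₗ[ℂ] E) with hRdef
  set F := R.topologicalClosure with hFdef
  have hFclosed : IsClosed (F : Set E) := R.isClosed_topologicalClosure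
  have hRF : ∀ k : K, Tadj k ∈ F := fun k => R.le_topologicalClosure ⟨k, rfl⟩
  -- (a) z ⊥ F → T z = 0
  have perp_to_ker : ∀ z : E, (∀ w ∈ F, inner (𝕜 := A) z w = 0) → T z = 0 := by
    intro z hz
    have h1 : inner (𝕜 := A) (T z) (T z) = 0 := by
      rw [hT z (T z)]; exact hz _ (hRF _)
    exact RightCStarModule.inner_self.mp h1
  -- (b) T z = 0 → z ⊥ F
  have ker_to_perp : ∀ z : E, T z = 0 → ∀ w ∈ F, inner (𝕜 := A) z w = 0 := by
    intro z hz w hw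
    have hw' : w ∈ closure (R : Set E) := by
      rw [← Submodule.topologicalClosure_coe]; exact hw
    have hset : IsClosed {w : E | inner (𝕜 := A) z w = 0} :=
      isClosed_eq (RightCStarModule.innerSL (A := A) z).continuous continuous_const
    have hsub : (R : Set E) ⊆ {w : E | inner (𝕜 := A) z w = 0} := by
      rintro _ ⟨k, rfl⟩
      show inner (𝕜 := A) z (Tadj k) = 0
      rw [← hT z k, hz]; simp
    exact closure_minimal hsub hset hw'
  -- uniqueness in F
  have uniq : ∀ y ∈ F, ∀ y' ∈ F, T y = T y' → y = y' := by
    intro y hy y' hy' hTy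
    have hz : T (y - y') = 0 := by rw [map_sub, hTy, sub_self]
    have h0 : inner (𝕜 := A) (y - y') (y - y') = 0 :=
      ker_to_perp _ hz _ (F.sub_mem hy hy')
    have := RightCStarModule.inner_self.mp h0
    exact sub_eq_zero.mp this
  -- existence
  have exi : ∀ h : H, ∃ y, y ∈ F ∧ T y = T' h := by
    intro h
    obtain ⟨e, he⟩ := hrange ⟨h, rfl⟩
    obtain ⟨y, z, hyF, hzperp, rfl⟩ := hcompl e
    refine ⟨y, hyF, ?_⟩
    have hz0 : T z = 0 := perp_to_ker z hzperp
    rw [← he, map_add, hz0, add_zero]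
  choose X0 hX0F hX0T using exi
  have hadd : ∀ h h', X0 (h + h') = X0 h + X0 h' := by
    intro h h'
    refine uniq _ (hX0F _) _ (F.add_mem (hX0F h) (hX0F h')) ?_
    rw [hX0T, map_add, map_add, hX0T, hX0T]
  have hsmul : ∀ (c : ℂ) h, X0 (c • h) = c • X0 h := by
    intro c h
    refine uniq _ (hX0F _) _ (F.smul_mem c (hX0F h)) ?_
    rw [hX0T, map_smul, map_smul, hX0T]
  let Xlin : H →ₗ[ℂ] E :=
    { toFun := X0, map_add' := hadd, map_smul' := hsmul }
  have hXcont : Continuous Xlin := by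
    apply Xlin.continuous_of_seq_closed_graph
    intro u x y hu hXu
    have hyF : y ∈ F := hFclosed.mem_of_tendsto hXu
      (Filter.Eventually.of_forall fun n => hX0F (u n))
    have h1 : Filter.Tendsto (fun n => T (X0 (u n))) Filter.atTop (nhds (T y)) :=
      (T.continuous.tendsto y).comp hXu
    have h2 : (fun n => T (X0 (u n))) = fun n => T' (u n) :=
      funext fun n => hX0T (u n)
    have h3 : Filter.Tendsto (fun n => T' (u n)) Filter.atTop (nhds (T' x)) :=
      (T'.continuous.tendsto x).comp hu
    have hTy : T y = T' x := tendsto_nhds_unique (h2 ▸ h1) h3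
    exact uniq y hyF (X0 x) (hX0F x) (hTy.trans (hX0T x).symm)
  let X : H →L[ℂ] E := ⟨Xlin, hXcont⟩
  -- decomposition uniqueness
  have decomp_uniq : ∀ (y z y' z' : E), y ∈ F → y' ∈ F →
      (∀ w ∈ F, inner (𝕜 := A) z w = 0) → (∀ w ∈ F, inner (𝕜 := A) z' w = 0) →
      y + z = y' + z' → y = y' := by
    intro y z y' z' hy hy' hz hz' heq
    have hsub : y - y' = z' - z := by
      rw [sub_eq_sub_iff_add_eq_add, heq, add_comm]
    have h0 : inner (𝕜 := A) (y - y') (y - y') = 0 := by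
      nth_rewrite 1 [hsub]
      rw [RightCStarModule.inner_sub_left, hz' _ (F.sub_mem hy hy'),
        hz _ (F.sub_mem hy hy'), sub_zero]
    exact sub_eq_zero.mp (RightCStarModule.inner_self.mp h0)
  choose P0 Z0 hP0F hZ0 hPZ using hcompl
  have hPadd : ∀ e e', P0 (e + e') = P0 e + P0 e' := by
    intro e e'
    refine decomp_uniq _ (Z0 (e + e')) _ (Z0 e + Z0 e') (hP0F _)
      (F.add_mem (hP0F e) (hP0F e')) (hZ0 _) ?_ ?_
    · intro w hw
      rw [RightCStarModule.inner_add_left, hZ0 e w hw, hZ0 e' w hw, add_zero]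
    · rw [← hPZ (e + e')]
      conv_lhs => rw [hPZ e, hPZ e']
      abel
  have hPsmul : ∀ (c : ℂ) e, P0 (c • e) = c • P0 e := by
    intro c e
    refine decomp_uniq _ (Z0 (c • e)) _ (c • Z0 e) (hP0F _)
      (F.smul_mem c (hP0F e)) (hZ0 _) ?_ ?_
    · intro w hw
      rw [RightCStarModule.inner_smul_left_complex, hZ0 e w hw, smul_zero]
    · rw [← hPZ (c • e)]
      conv_lhs => rw [hPZ e]
      rw [smul_add]
  have hPnorm : ∀ e : E, ‖P0 e‖ ≤ ‖e‖ := by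
    intro e
    have key : inner (𝕜 := A) e e
        = inner (𝕜 := A) (P0 e) (P0 e) + inner (𝕜 := A) (Z0 e) (Z0 e) := by
      conv_lhs => rw [hPZ e]
      rw [RightCStarModule.inner_add_right, RightCStarModule.inner_add_left,
        RightCStarModule.inner_add_left]
      have h1 : inner (𝕜 := A) (Z0 e) (P0 e) = 0 := hZ0 e _ (hP0F e)
      have h2 : inner (𝕜 := A) (P0 e) (Z0 e) = 0 := by
        rw [← RightCStarModule.star_inner, h1, star_zero]
      rw [h1, h2]; abel
    have hle : inner (𝕜 := A) (P0 e) (P0 e) ≤ inner (𝕜 := A) e e := by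
      rw [key]; exact le_add_of_nonneg_right RightCStarModule.inner_self_nonneg
    have hn : ‖P0 e‖ ^ 2 ≤ ‖e‖ ^ 2 := by
      rw [RightCStarModule.norm_sq_eq, RightCStarModule.norm_sq_eq]
      exact CStarAlgebra.norm_le_norm_of_nonneg_of_le
        RightCStarModule.inner_self_nonneg hle
    exact le_of_pow_le_pow_left₀ two_ne_zero (norm_nonneg e) hn
  let Plin : E →ₗ[ℂ] E := { toFun := P0, map_add' := hPadd, map_smul' := hPsmul }
  let P : E →L[ℂ] E := Plin.mkContinuous 1 (fun e => by rw [one_mul]; exact hPnorm e)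
  let P' : E →L[ℂ] F := P.codRestrict F (fun e => hP0F e)
  -- the inclusion of R into F
  let ιlin : R →ₗ[ℂ] F := Submodule.inclusion R.le_topologicalClosure
  have ιiso : Isometry ιlin := AddMonoidHomClass.isometry_of_norm ιlin (fun x => rfl)
  let ι : R →L[ℂ] F := ⟨ιlin, ιiso.continuous⟩
  have hui : IsUniformInducing ι := ιiso.isUniformInducing
  have hdense : DenseRange ι := by
    intro x
    have hx : (x : E) ∈ closure (R : Set E) := by
      have hcoe : (F : Set E) = closure (R : Set E) := Submodule.topologicalClosure_coe R
      exact hcoe ▸ x.2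
    rw [mem_closure_iff_seq_limit] at hx
    obtain ⟨u, huR, hu⟩ := hx
    have htt : Filter.Tendsto (fun n : ℕ => ι ⟨u n, huR n⟩) Filter.atTop (nhds x) :=
      tendsto_subtype_rng.mpr hu
    exact mem_closure_of_tendsto htt
      (Filter.Eventually.of_forall fun n => Set.mem_range_self _)
  -- well-definedness
  have wd : ∀ k k' : K, Tadj k = Tadj k' → T'adj k = T'adj k' := by
    intro k k' hkk
    have hd : Tadj (k - k') = 0 := by rw [map_sub, hkk, sub_self]
    have h1 : inner (𝕜 := A) (T'adj (k - k')) (T'adj (k - k')) = 0 := by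
      rw [← hT' (T'adj (k - k')) (k - k')]
      obtain ⟨e, he⟩ := hrange ⟨T'adj (k - k'), rfl⟩
      rw [← he, hT, hd]; simp
    have := RightCStarModule.inner_self.mp h1
    rw [map_sub] at this
    exact sub_eq_zero.mp this
  let Y0fun : R → H := fun v => T'adj (Classical.choose v.2)
  have hY0spec : ∀ v : R, Tadj (Classical.choose v.2) = (v : E) := fun v =>
    Classical.choose_spec v.2
  have hY0' : ∀ (v : R) (k : K), Tadj k = (v : E) → Y0fun v = T'adj k := by
    intro v k hk
    exact wd _ _ ((hY0spec v).trans hk.symm)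
  have hY0add : ∀ v w : R, Y0fun (v + w) = Y0fun v + Y0fun w := by
    intro v w
    rw [hY0' (v + w) (Classical.choose v.2 + Classical.choose w.2)
      (by rw [map_add, hY0spec, hY0spec]; rfl), map_add]
  have hY0smul : ∀ (c : ℂ) (v : R), Y0fun (c • v) = c • Y0fun v := by
    intro c v
    rw [hY0' (c • v) (c • Classical.choose v.2)
      (by rw [map_smul, hY0spec]; rfl), map_smul]
  have hY0bound : ∀ v : R, ‖Y0fun v‖ ≤ ‖X‖ * ‖v‖ := by
    intro v
    set k := Classical.choose v.2 with hk
    have hTk : Tadj k = (v : E) := hY0spec v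
    show ‖T'adj k‖ ≤ ‖X‖ * ‖v‖
    by_cases h0 : T'adj k = 0
    · rw [h0, norm_zero]
      exact mul_nonneg (norm_nonneg _) (norm_nonneg _)
    · have hpos : 0 < ‖T'adj k‖ := norm_pos_iff.mpr h0
      have hchain : inner (𝕜 := A) (T'adj k) (T'adj k)
          = inner (𝕜 := A) (X (T'adj k)) (Tadj k) := by
        rw [← hT' (T'adj k) k, ← hX0T (T'adj k), hT]
        rfl
      have hsq : ‖T'adj k‖ ^ 2 ≤ (‖X‖ * ‖v‖) * ‖T'adj k‖ := by
        rw [RightCStarModule.norm_sq_eq, hchain]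
        calc ‖inner (𝕜 := A) (X (T'adj k)) (Tadj k)‖
            ≤ ‖X (T'adj k)‖ * ‖Tadj k‖ := RightCStarModule.norm_inner_le E
          _ ≤ (‖X‖ * ‖T'adj k‖) * ‖Tadj k‖ := by
              gcongr; exact X.le_opNorm _
          _ = (‖X‖ * ‖Tadj k‖) * ‖T'adj k‖ := by ring
          _ = (‖X‖ * ‖v‖) * ‖T'adj k‖ := by
              have hnv : ‖Tadj k‖ = ‖v‖ := by rw [hTk, ← Submodule.coe_norm]
              rw [hnv]
      have hsq' : ‖T'adj k‖ * ‖T'adj k‖ ≤ (‖X‖ * ‖v‖) * ‖T'adj k‖ := by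
        rw [← pow_two]; exact hsq
      exact le_of_mul_le_mul_right hsq' hpos
  let Y0lin : R →ₗ[ℂ] H := { toFun := Y0fun, map_add' := hY0add, map_smul' := hY0smul }
  let Y0 : R →L[ℂ] H := Y0lin.mkContinuous ‖X‖ hY0bound
  let Y : F →L[ℂ] H := Y0.extend ι
  have hYι : ∀ v : R, Y (ι v) = Y0 v := fun v =>
    ContinuousLinearMap.extend_eq (f := Y0) (e := ι) hdense hui v
  let Xadj : E →L[ℂ] H := Y.comp P'
  refine ⟨X, ⟨Xadj, ?_⟩, fun h => (hX0T h).symm⟩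
  intro h e
  have hXF : (X h : E) ∈ F := hX0F h
  have hZX : inner (𝕜 := A) (Z0 e) (X h) = 0 := hZ0 e (X h) hXF
  have hperp : inner (𝕜 := A) (X h) (Z0 e) = 0 := by
    rw [← RightCStarModule.star_inner, hZX, star_zero]
  have key : ∀ w : F, inner (𝕜 := A) (X h) (w : E) = inner (𝕜 := A) h (Y w) := by
    have hc1 : Continuous (fun w : F => inner (𝕜 := A) (X h) (w : E)) :=
      (RightCStarModule.innerSL (A := A) (X h)).continuous.comp continuous_subtype_val
    have hc2 : Continuous (fun w : F => inner (𝕜 := A) h (Y w)) :=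
      (RightCStarModule.innerSL (A := A) h).continuous.comp Y.continuous
    have heq : Set.EqOn (fun w : F => inner (𝕜 := A) (X h) (w : E))
        (fun w : F => inner (𝕜 := A) h (Y w)) (Set.range ι) := by
      rintro _ ⟨v, rfl⟩
      obtain ⟨k, hk⟩ := v.2
      have hval : ((ι v : F) : E) = Tadj k := hk.symm
      show inner (𝕜 := A) (X h) ((ι v : F) : E) = inner (𝕜 := A) h (Y (ι v))
      rw [hval, hYι v]
      have h1 : (Y0 v : H) = T'adj k := hY0' v k hk
      have h2 : T (X h) = T' h := hX0T h
      rw [h1, ← hT (X h) k, h2, hT' h k]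
    have := Continuous.ext_on hdense hc1 hc2 heq
    exact fun w => congrFun this w
  calc inner (𝕜 := A) (X h) e
      = inner (𝕜 := A) (X h) (P0 e) + inner (𝕜 := A) (X h) (Z0 e) := by
        conv_lhs => rw [hPZ e]
        rw [RightCStarModule.inner_add_right]
    _ = inner (𝕜 := A) (X h) (P0 e) := by rw [hperp, add_zero]
    _ = inner (𝕜 := A) h (Y ⟨P0 e, hP0F e⟩) := key ⟨P0 e, hP0F e⟩
    _ = inner (𝕜 := A) h (Xadj e) := rfl
end

section
/- Let E, H and K be Hilbert 𝔄-modules and T ∈ L(E, K). Suppose that the norm closure of R(T*) is orthogonally complemented in E, and let T′ ∈ L(H, K) satisfy R(T′) ⊆ R(T). Then there exists a unique D ∈ L(H, E) such that T′ = TD and R(D) ⊆ N(T)⊥. -/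
open scoped RightActions

/-- The Hilbert C⋆-module class as it stood in Mathlib (Dec 2024): right `A`-action via `Aᵐᵒᵖ`,
inner product `A`-linear on the right, `⟪x, y <• a⟫ = ⟪x, y⟫ * a`. -/
class OldCStarModule (A : outParam <| Type*) (E : Type*) [NonUnitalSemiring A] [StarRing A]
    [Module ℂ A] [AddCommGroup E] [Module ℂ E] [PartialOrder A] [SMul Aᵐᵒᵖ E] [Norm A] [Norm E]
    extends Inner A E where
  inner_add_right {x} {y} {z} : inner x (y + z) = inner x y + inner x z
  inner_self_nonneg {x} : 0 ≤ inner x x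
  inner_self {x} : inner x x = 0 ↔ x = 0
  inner_op_smul_right {a : A} {x y : E} : inner x (y <• a) = inner x y * a
  inner_smul_right_complex {z : ℂ} {x} {y} : inner x (z • y) = z • inner x y
  star_inner x y : star (inner x y) = inner y x
  norm_eq_sqrt_norm_inner_self x : ‖x‖ = √‖inner x x‖

namespace OldCStarModule

variable {A E : Type*} [NonUnitalCStarAlgebra A] [PartialOrder A] [StarOrderedRing A]
  [NormedAddCommGroup E] [NormedSpace ℂ E] [SMul Aᵐᵒᵖ E] [OldCStarModule A E]

theorem inner_zero_right' {x : E} : inner A x (0 : E) = 0 := by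
  have := OldCStarModule.inner_smul_right_complex (A := A) (z := (0 : ℂ)) (x := x) (y := (0 : E))
  simpa using this

@[simp]
theorem inner_zero_left' {x : E} : inner A (0 : E) x = 0 := by
  rw [← OldCStarModule.star_inner x 0, inner_zero_right', star_zero]

theorem inner_neg_right' {x y : E} : inner A x (-y) = -inner A x y := by
  have := OldCStarModule.inner_smul_right_complex (A := A) (z := (-1 : ℂ)) (x := x) (y := y)
  simpa using this

theorem inner_sub_right {x y z : E} : inner A x (y - z) = inner A x y - inner A x z := by
  rw [sub_eq_add_neg, OldCStarModule.inner_add_right, inner_neg_right', ← sub_eq_add_neg]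

theorem inner_sub_left {x y z : E} : inner A (x - y) z = inner A x z - inner A y z := by
  rw [← OldCStarModule.star_inner z (x - y), inner_sub_right, star_sub,
    OldCStarModule.star_inner, OldCStarModule.star_inner]

theorem inner_op_smul_left' {a : A} {x y : E} : inner A (x <• a) y = star a * inner A x y := by
  rw [← OldCStarModule.star_inner y, OldCStarModule.inner_op_smul_right, star_mul,
    OldCStarModule.star_inner]

theorem inner_smul_right_real' {r : ℝ} {x y : E} : inner A x (r • y) = r • inner A x y := by
  rw [← Complex.coe_smul r y, OldCStarModule.inner_smul_right_complex, Complex.coe_smul]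

theorem inner_smul_left_real' {r : ℝ} {x y : E} : inner A (r • x) y = r • inner A x y := by
  rw [← OldCStarModule.star_inner y, inner_smul_right_real', star_smul, star_trivial,
    OldCStarModule.star_inner]

theorem norm_sq_eq {x : E} : ‖x‖ ^ 2 = ‖inner A x x‖ := by
  rw [OldCStarModule.norm_eq_sqrt_norm_inner_self (A := A) x, Real.sq_sqrt (norm_nonneg _)]

theorem inner_mul_inner_swap_le' {x y : E} :
    inner A y x * inner A x y ≤ ‖x‖ ^ 2 • inner A y y := by
  rcases eq_or_ne x 0 with h | h
  · rw [h, inner_zero_right', zero_mul, norm_zero]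
    simp
  · have hpos : (0 : ℝ) < ‖x‖ ^ 2 := pow_pos (norm_pos_iff.mpr h) 2
    have key : (0 : A) ≤ inner A (x <• inner A x y - (‖x‖ ^ 2) • y)
        (x <• inner A x y - (‖x‖ ^ 2) • y) := OldCStarModule.inner_self_nonneg
    have expand : inner A (x <• inner A x y - (‖x‖ ^ 2) • y)
        (x <• inner A x y - (‖x‖ ^ 2) • y) =
        inner A y x * inner A x x * inner A x y
          - (‖x‖ ^ 2) • (inner A y x * inner A x y)
          - (‖x‖ ^ 2) • (inner A y x * inner A x y)
          + (‖x‖ ^ 2) • ((‖x‖ ^ 2) • inner A y y) := by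
      simp only [inner_sub_left, inner_sub_right, inner_op_smul_left',
        OldCStarModule.inner_op_smul_right, inner_smul_right_real', inner_smul_left_real',
        OldCStarModule.star_inner, mul_assoc]
      simp only [sub_mul, mul_sub, smul_mul_assoc, mul_smul_comm, smul_sub, mul_assoc]
      abel
    have hb : inner A y x * inner A x x * inner A x y ≤
        (‖x‖ ^ 2) • (inner A y x * inner A x y) := by
      have := CStarAlgebra.star_left_conjugate_le_norm_smul (a := inner A x y)
        (b := inner A x x) (OldCStarModule.star_inner x x)
      rw [OldCStarModule.star_inner, ← norm_sq_eq] at this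
      exact this
    have h3 : (0 : A) ≤ (‖x‖ ^ 2) • (inner A y x * inner A x y)
          - (‖x‖ ^ 2) • (inner A y x * inner A x y)
          - (‖x‖ ^ 2) • (inner A y x * inner A x y)
          + (‖x‖ ^ 2) • ((‖x‖ ^ 2) • inner A y y) :=
      le_trans key (by rw [expand]; gcongr)
    have h4 : (‖x‖ ^ 2) • (inner A y x * inner A x y) ≤
        (‖x‖ ^ 2) • ((‖x‖ ^ 2) • inner A y y) := by
      have e : (‖x‖ ^ 2) • ((‖x‖ ^ 2) • inner A y y) - (‖x‖ ^ 2) • (inner A y x * inner A x y)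
          = (‖x‖ ^ 2) • (inner A y x * inner A x y)
          - (‖x‖ ^ 2) • (inner A y x * inner A x y)
          - (‖x‖ ^ 2) • (inner A y x * inner A x y)
          + (‖x‖ ^ 2) • ((‖x‖ ^ 2) • inner A y y) := by abel
      exact sub_nonneg.mp (e ▸ h3)
    exact (smul_le_smul_iff_of_pos_left hpos).mp h4

variable (E) in
theorem norm_inner_le {x y : E} : ‖inner A x y‖ ≤ ‖x‖ * ‖y‖ := by
  have h : ‖inner A x y‖ ^ 2 ≤ (‖x‖ * ‖y‖) ^ 2 := calc
    ‖inner A x y‖ ^ 2 = ‖inner A y x * inner A x y‖ := by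
        rw [← OldCStarModule.star_inner x y, CStarRing.norm_star_mul_self, pow_two]
    _ ≤ ‖‖x‖ ^ 2 • inner A y y‖ := CStarAlgebra.norm_le_norm_of_nonneg_of_le
        (by rw [← OldCStarModule.star_inner x y]; exact star_mul_self_nonneg _)
        inner_mul_inner_swap_le'
    _ = ‖x‖ ^ 2 * ‖inner A y y‖ := by simp [norm_smul]
    _ = (‖x‖ * ‖y‖) ^ 2 := by rw [← norm_sq_eq (A := A) (x := y), mul_pow]
  exact (pow_le_pow_iff_left₀ (norm_nonneg _) (by positivity) (by norm_num)).mp h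

end OldCStarModule

open Filter Topology in
private lemma cont_inner_right_aux {A E : Type*} [NonUnitalCStarAlgebra A] [PartialOrder A]
    [StarOrderedRing A] [NormedAddCommGroup E] [NormedSpace ℂ E] [SMul Aᵐᵒᵖ E]
    [OldCStarModule A E] (x : E) : Continuous (fun w : E => inner (𝕜 := A) x w) := by
  let f : E →+ A :=
    { toFun := fun w => inner A x w
      map_zero' := OldCStarModule.inner_zero_right'
      map_add' := fun _ _ => OldCStarModule.inner_add_right }
  exact AddMonoidHomClass.continuous_of_bound f ‖x‖ fun w => by
    show ‖inner A x w‖ ≤ ‖x‖ * ‖w‖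
    exact OldCStarModule.norm_inner_le E

/-- **Theorem 3.2 (reduced solution).**  Let `E, H, K` be Hilbert `A`-modules and
`T ∈ L(E,K)` adjointable with the norm closure of `R(T*)` orthogonally complemented in `E`,
and let `T' ∈ L(H,K)` be adjointable with `R(T') ⊆ R(T)`.  Then there is a unique adjointable
`D ∈ L(H,E)` such that `T' = T D` and `R(D) ⊆ N(T)⊥`. -/
theorem exists_unique_reduced_solution
    {A : Type*} [NonUnitalCStarAlgebra A] [PartialOrder A] [StarOrderedRing A]
    {E H K : Type*}
    [NormedAddCommGroup E] [NormedSpace ℂ E] [SMul Aᵐᵒᵖ E] [OldCStarModule A E] [CompleteSpace E]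
    [NormedAddCommGroup H] [NormedSpace ℂ H] [SMul Aᵐᵒᵖ H] [OldCStarModule A H] [CompleteSpace H]
    [NormedAddCommGroup K] [NormedSpace ℂ K] [SMul Aᵐᵒᵖ K] [OldCStarModule A K] [CompleteSpace K]
    (T : E →L[ℂ] K) (Tadj : K →L[ℂ] E)
    (hT : ∀ (x : E) (y : K), inner (𝕜 := A) (T x) y = inner (𝕜 := A) x (Tadj y))
    (hcompl : ∀ x : E, ∃ y z : E,
      y ∈ (LinearMap.range (Tadj : K →ₗ[ℂ] E)).topologicalClosure ∧
      (∀ w ∈ (LinearMap.range (Tadj : K →ₗ[ℂ] E)).topologicalClosure,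
        inner (𝕜 := A) z w = 0) ∧
      x = y + z)
    (T' : H →L[ℂ] K) (T'adj : K →L[ℂ] H)
    (hT' : ∀ (x : H) (y : K), inner (𝕜 := A) (T' x) y = inner (𝕜 := A) x (T'adj y))
    (hrange : Set.range T' ⊆ Set.range T) :
    ∃ D : H →L[ℂ] E,
      ((∃ Dadj : E →L[ℂ] H, ∀ (x : H) (y : E),
          inner (𝕜 := A) (D x) y = inner (𝕜 := A) x (Dadj y)) ∧
        (∀ h : H, T' h = T (D h)) ∧
        (∀ (h : H) (e : E), T e = 0 → inner (𝕜 := A) (D h) e = 0)) ∧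
      ∀ D' : H →L[ℂ] E,
        ((∃ D'adj : E →L[ℂ] H, ∀ (x : H) (y : E),
            inner (𝕜 := A) (D' x) y = inner (𝕜 := A) x (D'adj y)) ∧
          (∀ h : H, T' h = T (D' h)) ∧
          (∀ (h : H) (e : E), T e = 0 → inner (𝕜 := A) (D' h) e = 0)) → D' = D := by
  classical
  open Filter Topology in
  set F : Submodule ℂ E := (LinearMap.range (Tadj : K →ₗ[ℂ] E)).topologicalClosure with hFdef
  -- e ∈ null space of T implies e ⟂ F
  have hTperp : ∀ e : E, T e = 0 → ∀ w ∈ F, inner (𝕜 := A) e w = 0 := by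
    intro e he w hw
    have hcl : IsClosed {w : E | inner (𝕜 := A) e w = 0} :=
      isClosed_eq (cont_inner_right_aux e) continuous_const
    have hsub : ((LinearMap.range (Tadj : K →ₗ[ℂ] E)) : Set E) ⊆
        {w : E | inner (𝕜 := A) e w = 0} := by
      rintro _ ⟨k, rfl⟩
      show inner (𝕜 := A) e (Tadj k) = 0
      rw [← hT e k, he]
      simp
    have : (F : Set E) ⊆ {w : E | inner (𝕜 := A) e w = 0} := by
      rw [hFdef, Submodule.topologicalClosure_coe]
      exact closure_minimal hsub hcl
    exact this hw
  -- e ⟂ range Tadj implies T e = 0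
  have hperpT : ∀ e : E, (∀ k : K, inner (𝕜 := A) e (Tadj k) = 0) → T e = 0 := by
    intro e he
    have : inner (𝕜 := A) (T e) (T e) = 0 := by rw [hT e (T e)]; exact he (T e)
    exact OldCStarModule.inner_self.mp this
  have hmemF : ∀ k : K, Tadj k ∈ F :=
    fun k => Submodule.le_topologicalClosure _ ⟨k, rfl⟩
  -- uniqueness in F
  have huniq : ∀ y ∈ F, T y = 0 → y = 0 := by
    intro y hy hTy
    exact OldCStarModule.inner_self.mp (hTperp y hTy y hy)
  -- existence of reduced solution pointwise
  have hex : ∀ h : H, ∃ y : E, y ∈ F ∧ T y = T' h := by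
    intro h
    obtain ⟨e, he⟩ := hrange ⟨h, rfl⟩
    obtain ⟨y, z, hy, hz, hezy⟩ := hcompl e
    have hTz : T z = 0 := hperpT z fun k => hz _ (hmemF k)
    refine ⟨y, hy, ?_⟩
    have : T e = T y + T z := by rw [hezy, map_add]
    rw [← he, this, hTz, add_zero]
  choose g hgF hgT using hex
  have hgu : ∀ (h : H) (y : E), y ∈ F → T y = T' h → y = g h := by
    intro h y hy hTy
    have h1 : y - g h ∈ F := F.sub_mem hy (hgF h)
    have h2 : T (y - g h) = 0 := by rw [map_sub, hTy, hgT, sub_self]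
    exact sub_eq_zero.mp (huniq _ h1 h2)
  -- D as a linear map
  let glin : H →ₗ[ℂ] E :=
    { toFun := g
      map_add' := fun a b =>
        (hgu (a + b) (g a + g b) (F.add_mem (hgF a) (hgF b))
          (by rw [map_add, hgT, hgT, map_add])).symm
      map_smul' := fun c a =>
        (hgu (c • a) (c • g a) (F.smul_mem c (hgF a))
          (by rw [map_smul, hgT, map_smul])).symm }
  have hclosed : ∀ (u : ℕ → H) (x : H) (y : E), Tendsto u atTop (𝓝 x) →
      Tendsto (glin ∘ u) atTop (𝓝 y) → y = glin x := by
    intro u x y hu hgy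
    have hFclosed : IsClosed (F : Set E) := Submodule.isClosed_topologicalClosure _
    have hyF : y ∈ F := hFclosed.mem_of_tendsto hgy
      (Filter.Eventually.of_forall fun n => hgF (u n))
    have l1 : Tendsto (fun n => T (g (u n))) atTop (𝓝 (T y)) :=
      (T.continuous.tendsto y).comp hgy
    have l2 : Tendsto (fun n => T' (u n)) atTop (𝓝 (T' x)) :=
      (T'.continuous.tendsto x).comp hu
    have heq : (fun n => T (g (u n))) = fun n => T' (u n) := funext fun n => hgT (u n)
    exact hgu x y hyF (tendsto_nhds_unique (heq ▸ l1) l2)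
  let D : H →L[ℂ] E := ContinuousLinearMap.ofSeqClosedGraph hclosed
  have hD : ∀ h : H, D h = g h := fun _ => rfl
  have hTD : ∀ h : H, T' h = T (D h) := fun h => by rw [hD, hgT]
  -- third condition for D
  have hDperp : ∀ (h : H) (e : E), T e = 0 → inner (𝕜 := A) (D h) e = 0 := by
    intro h e hTe
    have h1 : inner (𝕜 := A) e (D h) = 0 := hTperp e hTe (D h) (hD h ▸ hgF h)
    rw [← OldCStarModule.star_inner, h1, star_zero]
  -- key norm inequality
  have hkey : ∀ k : K, ‖T'adj k‖ ≤ ‖D‖ * ‖Tadj k‖ := by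
    intro k
    have e1 : inner (𝕜 := A) (T'adj k) (T'adj k) = inner (𝕜 := A) (D (T'adj k)) (Tadj k) :=
      calc inner (𝕜 := A) (T'adj k) (T'adj k) = inner (𝕜 := A) (T' (T'adj k)) k :=
            (hT' _ _).symm
        _ = inner (𝕜 := A) (T (D (T'adj k))) k := by rw [← hTD]
        _ = inner (𝕜 := A) (D (T'adj k)) (Tadj k) := hT _ _
    have e2 : ‖T'adj k‖ ^ 2 ≤ ‖D‖ * ‖Tadj k‖ * ‖T'adj k‖ := by
      rw [OldCStarModule.norm_sq_eq, e1]
      calc ‖inner (𝕜 := A) (D (T'adj k)) (Tadj k)‖ ≤ ‖D (T'adj k)‖ * ‖Tadj k‖ :=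
            OldCStarModule.norm_inner_le E
        _ ≤ (‖D‖ * ‖T'adj k‖) * ‖Tadj k‖ := by
            exact mul_le_mul_of_nonneg_right (D.le_opNorm _) (norm_nonneg _)
        _ = ‖D‖ * ‖Tadj k‖ * ‖T'adj k‖ := by ring
    rcases eq_or_lt_of_le (norm_nonneg (T'adj k)) with h0 | h0
    · rw [← h0]; positivity
    · nlinarith [e2, h0]
  -- existence of the adjoint, pointwise
  have hadj : ∀ e : E, ∃ u : H, ∀ h : H, inner (𝕜 := A) (D h) e = inner (𝕜 := A) h u := by
    intro e
    obtain ⟨y, z, hyF, hz, hezy⟩ := hcompl e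
    have hyc : y ∈ closure ((LinearMap.range (Tadj : K →ₗ[ℂ] E)) : Set E) := by
      rw [← Submodule.topologicalClosure_coe]; exact hyF
    obtain ⟨v, hvmem, hvt⟩ := mem_closure_iff_seq_limit.mp hyc
    choose ks hks using hvmem
    have hvfun : (fun n => Tadj (ks n)) = v := funext fun n => hks n
    have hvt' : Tendsto (fun n => Tadj (ks n)) atTop (𝓝 y) := hvfun ▸ hvt
    have hcauchy : CauchySeq (fun n => T'adj (ks n)) := by
      rw [Metric.cauchySeq_iff]
      have hc := hvt'.cauchySeq
      rw [Metric.cauchySeq_iff] at hc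
      intro ε hε
      obtain ⟨N, hN⟩ := hc (ε / (‖D‖ + 1)) (by positivity)
      refine ⟨N, fun n hn m hm => ?_⟩
      have h2 : ‖Tadj (ks n - ks m)‖ < ε / (‖D‖ + 1) := by
        rw [map_sub, ← dist_eq_norm]; exact hN n hn m hm
      calc dist (T'adj (ks n)) (T'adj (ks m)) = ‖T'adj (ks n - ks m)‖ := by
            rw [dist_eq_norm, ← map_sub]
        _ ≤ ‖D‖ * ‖Tadj (ks n - ks m)‖ := hkey _
        _ ≤ (‖D‖ + 1) * ‖Tadj (ks n - ks m)‖ :=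
            mul_le_mul_of_nonneg_right (by linarith) (norm_nonneg _)
        _ < (‖D‖ + 1) * (ε / (‖D‖ + 1)) := by
            exact mul_lt_mul_of_pos_left h2 (by positivity)
        _ = ε := by field_simp
    obtain ⟨u, hu⟩ := cauchySeq_tendsto_of_complete hcauchy
    refine ⟨u, fun h => ?_⟩
    have hDz : inner (𝕜 := A) (D h) z = 0 := by
      have h1 : inner (𝕜 := A) z (D h) = 0 := hz (D h) (hD h ▸ hgF h)
      rw [← OldCStarModule.star_inner, h1, star_zero]
    have l1 : Tendsto (fun n => inner (𝕜 := A) (D h) (Tadj (ks n))) atTop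
        (𝓝 (inner (𝕜 := A) (D h) y)) := ((cont_inner_right_aux (D h)).tendsto y).comp hvt'
    have l2 : (fun n => inner (𝕜 := A) (D h) (Tadj (ks n)))
        = fun n => inner (𝕜 := A) h (T'adj (ks n)) := funext fun n => by
      rw [← hT (D h) (ks n), ← hTD h, hT']
    have l3 : Tendsto (fun n => inner (𝕜 := A) h (T'adj (ks n))) atTop
        (𝓝 (inner (𝕜 := A) h u)) := ((cont_inner_right_aux h).tendsto u).comp hu
    have hy_eq : inner (𝕜 := A) (D h) y = inner (𝕜 := A) h u :=
      tendsto_nhds_unique (l2 ▸ l1) l3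
    calc inner (𝕜 := A) (D h) e
        = inner (𝕜 := A) (D h) y + inner (𝕜 := A) (D h) z := by
          rw [hezy, OldCStarModule.inner_add_right]
      _ = inner (𝕜 := A) h u := by rw [hDz, add_zero, hy_eq]
  -- uniqueness of adjoint values
  have huuniq : ∀ u u' : H, (∀ h : H, inner (𝕜 := A) h u = inner (𝕜 := A) h u') → u = u' := by
    intro u u' hcond
    have : inner (𝕜 := A) (u - u') (u - u') = 0 := by
      rw [OldCStarModule.inner_sub_right, hcond (u - u'), sub_self]
    exact sub_eq_zero.mp (OldCStarModule.inner_self.mp this)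
  choose Dadj0 hDadj0 using hadj
  let Dadjlin : E →ₗ[ℂ] H :=
    { toFun := Dadj0
      map_add' := fun a b => huuniq _ _ fun h => by
        rw [← hDadj0 (a + b) h, OldCStarModule.inner_add_right, OldCStarModule.inner_add_right,
          hDadj0 a h, hDadj0 b h]
      map_smul' := fun c a => huuniq _ _ fun h => by
        rw [← hDadj0 (c • a) h, OldCStarModule.inner_smul_right_complex,
          hDadj0 a h, RingHom.id_apply, OldCStarModule.inner_smul_right_complex] }
  have hadjclosed : ∀ (u : ℕ → E) (x : E) (y : H), Tendsto u atTop (𝓝 x) →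
      Tendsto (Dadjlin ∘ u) atTop (𝓝 y) → y = Dadjlin x := by
    intro u x y hu hy
    refine huuniq y (Dadj0 x) fun h => ?_
    have t1 : Tendsto (fun n => inner (𝕜 := A) h (Dadj0 (u n))) atTop
        (𝓝 (inner (𝕜 := A) h y)) := ((cont_inner_right_aux h).tendsto y).comp hy
    have t2 : (fun n => inner (𝕜 := A) h (Dadj0 (u n)))
        = fun n => inner (𝕜 := A) (D h) (u n) := funext fun n => (hDadj0 (u n) h).symm
    have t3 : Tendsto (fun n => inner (𝕜 := A) (D h) (u n)) atTop
        (𝓝 (inner (𝕜 := A) (D h) x)) := ((cont_inner_right_aux (D h)).tendsto x).comp hu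
    rw [← hDadj0 x h]
    exact tendsto_nhds_unique (t2 ▸ t1) t3
  let Dadj : E →L[ℂ] H := ContinuousLinearMap.ofSeqClosedGraph hadjclosed
  refine ⟨D, ⟨⟨Dadj, fun x y => hDadj0 y x⟩, hTD, hDperp⟩, ?_⟩
  rintro D' ⟨⟨D'adj, hD'adj⟩, hTD', hperpD'⟩
  ext h
  have hnull : T (D' h - D h) = 0 := by rw [map_sub, ← hTD' h, ← hTD h, sub_self]
  have i1 : inner (𝕜 := A) (D' h) (D' h - D h) = 0 := hperpD' h _ hnull
  have i2 : inner (𝕜 := A) (D h) (D' h - D h) = 0 := hDperp h _ hnull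
  have : inner (𝕜 := A) (D' h - D h) (D' h - D h) = 0 := by
    rw [OldCStarModule.inner_sub_left, i1, i2, sub_zero]
  exact sub_eq_zero.mp (OldCStarModule.inner_self.mp this)
end

section
/- Let E, H and K be Hilbert 𝔄-modules and T ∈ L(E, K). Suppose that the norm closure of R(T*) is orthogonally complemented in E, let T′ ∈ L(H, K) satisfy R(T′) ⊆ R(T), and let D ∈ L(H, E) be the unique operator with T′ = TD and R(D) ⊆ N(T)⊥. Then ‖D‖² = inf{λ > 0 : T′(T′)* ≤ λ TT*}. -/
set_option maxHeartbeats 1000000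

open scoped RightActions

/-- The right-module version of `CStarModule` as it stood in Mathlib of December 2024
(Mathlib's `CStarModule` is now a left module). -/
class CStarModuleOld (A E : Type*) [NonUnitalSemiring A] [StarRing A] [Module ℂ A]
    [AddCommGroup E] [Module ℂ E] [PartialOrder A] [SMul Aᵐᵒᵖ E] [Norm A] [Norm E]
    extends Inner A E where
  inner_add_right {x} {y} {z} : inner x (y + z) = inner x y + inner x z
  inner_self_nonneg {x} : 0 ≤ inner x x
  inner_self {x} : inner x x = 0 ↔ x = 0
  inner_op_smul_right {a : A} {x y : E} : inner x (y <• a) = inner x y * a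
  inner_smul_right_complex {z : ℂ} {x} {y} : inner x (z • y) = z • inner x y
  star_inner x y : star (inner x y) = inner y x
  norm_eq_sqrt_norm_inner_self x : ‖x‖ = √‖inner x x‖

namespace CStarModuleOld

variable {A : Type*} [NonUnitalCStarAlgebra A] [PartialOrder A] [StarOrderedRing A]
variable {E : Type*} [NormedAddCommGroup E] [NormedSpace ℂ E] [SMul Aᵐᵒᵖ E] [CStarModuleOld A E]

local notation "⟪" x ", " y "⟫" => inner (𝕜 := A) x y

lemma inner_add_left {x y z : E} : ⟪x + y, z⟫ = ⟪x, z⟫ + ⟪y, z⟫ := by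
  rw [← star_inner z (x + y), inner_add_right, star_add, star_inner, star_inner]

lemma inner_op_smul_left {a : A} {x y : E} : ⟪x <• a, y⟫ = star a * ⟪x, y⟫ := by
  rw [← star_inner y, inner_op_smul_right, star_mul, star_inner]

lemma inner_smul_right_real {z : ℝ} {x y : E} : ⟪x, z • y⟫ = z • ⟪x, y⟫ := by
  have h₁ : z • y = (z : ℂ) • y := by simp
  rw [h₁, inner_smul_right_complex]
  simp

lemma inner_smul_left_real {z : ℝ} {x y : E} : ⟪z • x, y⟫ = z • ⟪x, y⟫ := by
  rw [← star_inner y, inner_smul_right_real, star_smul, star_trivial, star_inner]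

lemma inner_zero_right {x : E} : ⟪x, 0⟫ = 0 := by
  have := inner_add_right (A := A) (x := x) (y := (0 : E)) (z := 0)
  simpa using this

lemma inner_zero_left {x : E} : ⟪0, x⟫ = 0 := by
  rw [← star_inner x, inner_zero_right, star_zero]

lemma inner_neg_right {x y : E} : ⟪x, -y⟫ = -⟪x, y⟫ := by
  apply eq_neg_of_add_eq_zero_left
  rw [← inner_add_right, neg_add_cancel, inner_zero_right]

lemma inner_sub_right {x y z : E} : ⟪x, y - z⟫ = ⟪x, y⟫ - ⟪x, z⟫ := by
  rw [sub_eq_add_neg, inner_add_right, inner_neg_right, ← sub_eq_add_neg]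

lemma inner_sub_left {x y z : E} : ⟪x - y, z⟫ = ⟪x, z⟫ - ⟪y, z⟫ := by
  rw [← star_inner z, inner_sub_right, star_sub, star_inner, star_inner]

lemma isSelfAdjoint_inner_self {x : E} : IsSelfAdjoint ⟪x, x⟫ := star_inner _ _

lemma norm_sq_eq {x : E} : ‖x‖ ^ 2 = ‖⟪x, x⟫‖ := by
  rw [norm_eq_sqrt_norm_inner_self (A := A) x, Real.sq_sqrt (norm_nonneg _)]

lemma inner_mul_inner_swap_le {x y : E} : ⟪y, x⟫ * ⟪x, y⟫ ≤ ‖x‖ ^ 2 • ⟪y, y⟫ := by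
  rcases eq_or_ne x 0 with h | h
  · simp [h, inner_zero_left, inner_zero_right]
  · have h₁ : ∀ a : A, (0 : A) ≤ ‖x‖ ^ 2 • (star a * a) - ‖x‖ ^ 2 • (⟪y, x⟫ * a)
        - ‖x‖ ^ 2 • (star a * ⟪x, y⟫) + ‖x‖ ^ 2 • (‖x‖ ^ 2 • ⟪y, y⟫) := fun a => by
      calc (0 : A) ≤ ⟪x <• a - ‖x‖ ^ 2 • y, x <• a - ‖x‖ ^ 2 • y⟫ := inner_self_nonneg
        _ = star a * ⟪x, x⟫ * a - ‖x‖ ^ 2 • (⟪y, x⟫ * a)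
              - ‖x‖ ^ 2 • (star a * ⟪x, y⟫) + ‖x‖ ^ 2 • (‖x‖ ^ 2 • ⟪y, y⟫) := by
            simp only [inner_sub_right, inner_op_smul_right, inner_sub_left, inner_op_smul_left,
              inner_smul_left_real, inner_smul_right_real, mul_sub, sub_mul, smul_sub,
              smul_mul_assoc, mul_smul_comm, mul_assoc]
            abel
        _ ≤ ‖x‖ ^ 2 • (star a * a) - ‖x‖ ^ 2 • (⟪y, x⟫ * a)
              - ‖x‖ ^ 2 • (star a * ⟪x, y⟫) + ‖x‖ ^ 2 • (‖x‖ ^ 2 • ⟪y, y⟫) := by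
            gcongr
            calc star a * ⟪x, x⟫ * a ≤ ‖⟪x, x⟫‖ • (star a * a) :=
                CStarAlgebra.star_left_conjugate_le_norm_smul isSelfAdjoint_inner_self
              _ = ‖x‖ ^ 2 • (star a * a) := by rw [norm_sq_eq (A := A)]
    specialize h₁ ⟪x, y⟫
    simp only [star_inner, sub_self, zero_sub, le_neg_add_iff_add_le, add_zero] at h₁
    rwa [smul_le_smul_iff_of_pos_left (pow_pos (norm_pos_iff.mpr h) _)] at h₁

variable (E) in
lemma norm_inner_le {x y : E} : ‖⟪x, y⟫‖ ≤ ‖x‖ * ‖y‖ := by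
  have := calc ‖⟪x, y⟫‖ ^ 2 = ‖⟪y, x⟫ * ⟪x, y⟫‖ := by
                rw [← star_inner x y, CStarRing.norm_star_mul_self, pow_two]
    _ ≤ ‖‖x‖ ^ 2 • ⟪y, y⟫‖ := by
                refine CStarAlgebra.norm_le_norm_of_nonneg_of_le ?_ inner_mul_inner_swap_le
                rw [← star_inner x y]
                exact star_mul_self_nonneg _
    _ = ‖x‖ ^ 2 * ‖⟪y, y⟫‖ := by
                rw [norm_smul, Real.norm_eq_abs, abs_of_nonneg (by positivity)]
    _ = ‖x‖ ^ 2 * ‖y‖ ^ 2 := by rw [norm_sq_eq (A := A) (x := y)]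
    _ = (‖x‖ * ‖y‖) ^ 2 := by ring
  exact (pow_le_pow_iff_left₀ (norm_nonneg _) (by positivity) (by norm_num)).mp this

end CStarModuleOld

section Aux

variable {A : Type*} [NonUnitalCStarAlgebra A] [PartialOrder A] [StarOrderedRing A]
variable {E : Type*} [NormedAddCommGroup E] [NormedSpace ℂ E] [SMul Aᵐᵒᵖ E] [CStarModuleOld A E]

local notation "⟪" x ", " y "⟫" => inner (𝕜 := A) x y

lemma aux_ext_inner {u v : E} (h : ∀ y : E, ⟪y, u⟫ = ⟪y, v⟫) : u = v := by
  have h2 : ⟪u - v, u - v⟫ = (0 : A) := by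
    rw [CStarModuleOld.inner_sub_right, h (u - v), sub_self]
  exact sub_eq_zero.mp (CStarModuleOld.inner_self.mp h2)

variable {F : Type*} [NormedAddCommGroup F] [NormedSpace ℂ F] [SMul Aᵐᵒᵖ F] [CStarModuleOld A F]

lemma aux_inner_rev (S : E →L[ℂ] F) (Sadj : F →L[ℂ] E)
    (hS : ∀ x y, ⟪S x, y⟫ = ⟪x, Sadj y⟫) (w : E) (y : F) :
    ⟪y, S w⟫ = ⟪Sadj y, w⟫ := by
  calc ⟪y, S w⟫ = star ⟪S w, y⟫ := (CStarModuleOld.star_inner _ _).symm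
  _ = star ⟪w, Sadj y⟫ := by rw [hS]
  _ = ⟪Sadj y, w⟫ := CStarModuleOld.star_inner _ _

lemma aux_map_op_smul (S : E →L[ℂ] F) (Sadj : F →L[ℂ] E)
    (hS : ∀ x y, ⟪S x, y⟫ = ⟪x, Sadj y⟫) (b : A) (v : E) :
    S (v <• b) = (S v) <• b := by
  apply aux_ext_inner (A := A)
  intro y
  rw [aux_inner_rev S Sadj hS, CStarModuleOld.inner_op_smul_right,
    CStarModuleOld.inner_op_smul_right, aux_inner_rev S Sadj hS]

lemma aux_opNorm_le (S : E →L[ℂ] F) (Sadj : F →L[ℂ] E)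
    (hS : ∀ x y, ⟪S x, y⟫ = ⟪x, Sadj y⟫) : ‖S‖ ≤ ‖Sadj‖ := by
  refine S.opNorm_le_bound (norm_nonneg _) fun v => ?_
  rcases eq_or_ne (S v) 0 with h | h
  · rw [h, norm_zero]
    positivity
  · have h2 : ‖S v‖ ^ 2 ≤ ‖Sadj‖ * ‖v‖ * ‖S v‖ := by
      calc ‖S v‖ ^ 2 = ‖⟪S v, S v⟫‖ := CStarModuleOld.norm_sq_eq
      _ = ‖⟪v, Sadj (S v)⟫‖ := by rw [hS]
      _ ≤ ‖v‖ * ‖Sadj (S v)‖ := CStarModuleOld.norm_inner_le E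
      _ ≤ ‖v‖ * (‖Sadj‖ * ‖S v‖) := by
          gcongr
          exact Sadj.le_opNorm _
      _ = ‖Sadj‖ * ‖v‖ * ‖S v‖ := by ring
    have h3 : 0 < ‖S v‖ := norm_pos_iff.mpr h
    nlinarith


lemma aux_inner_map_le (S : E →L[ℂ] F) (Sadj : F →L[ℂ] E)
    (hS : ∀ x y, ⟪S x, y⟫ = ⟪x, Sadj y⟫) (x : E) :
    ⟪S x, S x⟫ ≤ ‖S‖ ^ 2 • ⟪x, x⟫ := by
  set a : A := ⟪x, x⟫ with ha_def
  have ha : 0 ≤ a := CStarModuleOld.inner_self_nonneg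
  have ha_sa : IsSelfAdjoint a := CStarModuleOld.isSelfAdjoint_inner_self
  have key : ∀ ε : ℝ, 0 < ε →
      ((⟪S x, S x⟫ : A) : Unitization ℂ A) ≤
        (‖S‖ ^ 2 * ε) • (1 : Unitization ℂ A) + ‖S‖ ^ 2 • ((a : A) : Unitization ℂ A) := by
    intro ε hε
    have hsq : 0 < Real.sqrt ε := Real.sqrt_pos.mpr hε
    set r : ℝ := (Real.sqrt ε)⁻¹ with hr_def
    set f : ℝ → ℝ := fun t => (Real.sqrt (t + ε))⁻¹ - r with hf_def
    set g : ℝ → ℝ := fun t => Real.sqrt (t + ε) - Real.sqrt ε with hg_def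
    have hf0 : f 0 = 0 := by simp [hf_def, hr_def]
    have hg0 : g 0 = 0 := by simp [hg_def]
    have hspec : quasispectrum ℝ a ⊆ Set.Ici 0 := fun t ht =>
      quasispectrum_nonneg_of_nonneg a ha t ht
    have htpos : ∀ t ∈ quasispectrum ℝ a, 0 < t + ε := fun t ht => by
      have := hspec ht; simp only [Set.mem_Ici] at this; linarith
    have hne : ∀ t ∈ quasispectrum ℝ a, Real.sqrt (t + ε) ≠ 0 := fun t ht =>
      ne_of_gt (Real.sqrt_pos.mpr (htpos t ht))
    have hgco : ContinuousOn g (quasispectrum ℝ a) := by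
      apply Continuous.continuousOn
      fun_prop
    have hfco : ContinuousOn f (quasispectrum ℝ a) := by
      apply ContinuousOn.sub _ continuousOn_const
      exact ((Real.continuous_sqrt.comp (continuous_id.add continuous_const)).continuousOn.inv₀ hne)
    set c : A := cfcₙ f a with hc_def
    set d : A := cfcₙ g a with hd_def
    have hc_sa : IsSelfAdjoint c := cfcₙ_predicate f a
    have hd_sa : IsSelfAdjoint d := cfcₙ_predicate g a
    -- identity (A)
    have hA : Real.sqrt ε • c + r • d + c * d = 0 := by
      have e1 : cfcₙ (fun t => (Real.sqrt ε • f t + r • g t) + f t * g t) a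
          = Real.sqrt ε • c + r • d + c * d := by
        rw [cfcₙ_add (f := fun t => Real.sqrt ε • f t + r • g t) (g := fun t => f t * g t) a
            ((hfco.const_smul (Real.sqrt ε)).add (hgco.const_smul r)) (by simp [hf0, hg0])
            (hfco.mul hgco) (by simp [hf0, hg0]),
          cfcₙ_add (f := fun t => Real.sqrt ε • f t) (g := fun t => r • g t) a
            (hfco.const_smul (Real.sqrt ε)) (by simp [hf0]) (hgco.const_smul r) (by simp [hg0]),
          cfcₙ_mul _ _ a hfco hf0 hgco hg0,
          cfcₙ_smul _ _ a hfco hf0, cfcₙ_smul _ _ a hgco hg0]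
      rw [← e1]
      rw [cfcₙ_congr (g := fun _ => (0:ℝ)) ?_]
      · exact cfcₙ_const_zero ℝ a
      · intro t ht
        have hs := hne t ht
        have hε' : Real.sqrt ε ≠ 0 := hsq.ne'
        simp only [hf_def, hg_def, hr_def, smul_eq_mul]
        field_simp
        ring
    -- identity (C)
    have hC : (2 * Real.sqrt ε) • d + d * d = a := by
      have e1 : cfcₙ (fun t => (2 * Real.sqrt ε) • g t + g t * g t) a
          = (2 * Real.sqrt ε) • d + d * d := by
        rw [cfcₙ_add (f := fun t => (2 * Real.sqrt ε) • g t) (g := fun t => g t * g t) a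
            (hgco.const_smul (2 * Real.sqrt ε)) (by simp [hg0]) (hgco.mul hgco) (by simp [hg0]),
          cfcₙ_mul _ _ a hgco hg0 hgco hg0, cfcₙ_smul _ _ a hgco hg0]
      rw [← e1]
      rw [cfcₙ_congr (g := fun t => t) ?_]
      · exact cfcₙ_id' ℝ a
      · intro t ht
        have h1 : Real.sqrt (t + ε) * Real.sqrt (t + ε) = t + ε :=
          Real.mul_self_sqrt (htpos t ht).le
        have h2 : Real.sqrt ε * Real.sqrt ε = ε := Real.mul_self_sqrt hε.le
        simp only [hg_def, smul_eq_mul]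
        nlinarith
    -- the element xε and its norm
    set xε : E := r • x + x <• c with hxe_def
    have hac : a * c = cfcₙ (fun t => t * f t) a := by
      conv_rhs => rw [cfcₙ_mul (fun t : ℝ => t) f a continuousOn_id (by simp) hfco hf0,
        cfcₙ_id' ℝ a, ← hc_def]
    have hca : c * a = cfcₙ (fun t => f t * t) a := by
      conv_rhs => rw [cfcₙ_mul f (fun t : ℝ => t) a hfco hf0 continuousOn_id (by simp),
        cfcₙ_id' ℝ a, ← hc_def]
    have hcac : c * (a * c) = cfcₙ (fun t => f t * (t * f t)) a := by
      conv_rhs => rw [cfcₙ_mul f (fun t => t * f t) a hfco hf0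
        (continuousOn_id.mul hfco) (by simp [hf0]), ← hac, ← hc_def]
    have hra : r • a = cfcₙ (fun t => r • t) a := (cfcₙ_smul_id (R := ℝ) r a).symm
    have e1 : cfcₙ (fun t => (r • (r • t) + r • (t * f t)) + (r • (f t * t) + f t * (t * f t))) a
        = (r • (r • a) + r • (a * c)) + (r • (c * a) + c * (a * c)) := by
      rw [cfcₙ_add (f := fun t => r • (r • t) + r • (t * f t))
          (g := fun t => r • (f t * t) + f t * (t * f t)) a
          (((continuousOn_id.const_smul r).const_smul r).add
            ((continuousOn_id.mul hfco).const_smul r)) (by simp [hf0])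
          (((hfco.mul continuousOn_id).const_smul r).add
            (hfco.mul (continuousOn_id.mul hfco))) (by simp [hf0]),
        cfcₙ_add (f := fun t => r • (r • t)) (g := fun t => r • (t * f t)) a
          ((continuousOn_id.const_smul r).const_smul r) (by simp)
          ((continuousOn_id.mul hfco).const_smul r) (by simp [hf0]),
        cfcₙ_add (f := fun t => r • (f t * t)) (g := fun t => f t * (t * f t)) a
          ((hfco.mul continuousOn_id).const_smul r) (by simp [hf0])
          (hfco.mul (continuousOn_id.mul hfco)) (by simp [hf0]),
        cfcₙ_smul r (fun t : ℝ => r • t) a (continuousOn_id.const_smul r) (by simp),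
        cfcₙ_smul r (fun t : ℝ => t * f t) a (continuousOn_id.mul hfco) (by simp [hf0]),
        cfcₙ_smul r (fun t : ℝ => f t * t) a (hfco.mul continuousOn_id) (by simp [hf0]),
        cfcₙ_mul f (fun t : ℝ => t * f t) a hfco hf0 (continuousOn_id.mul hfco) (by simp [hf0]),
        ← hra, ← hac, ← hca]
    have hp : ⟪xε, xε⟫ =
        cfcₙ (fun t => (r • (r • t) + r • (t * f t)) + (r • (f t * t) + f t * (t * f t))) a := by
      have hinner : ⟪xε, xε⟫ = (r • (r • a) + r • (a * c)) + (r • (c * a) + c * (a * c)) := by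
        simp only [hxe_def, CStarModuleOld.inner_add_left, CStarModuleOld.inner_add_right,
          CStarModuleOld.inner_op_smul_right, CStarModuleOld.inner_op_smul_left,
          CStarModuleOld.inner_smul_left_real, CStarModuleOld.inner_smul_right_real,
          hc_sa.star_eq, ← ha_def, smul_add, mul_add, add_mul, smul_mul_assoc,
          mul_smul_comm, mul_assoc]
        abel
      rw [hinner, ← e1]
    have hxε : ‖xε‖ ≤ 1 := by
      have h2 : ‖xε‖ ^ 2 ≤ 1 := by
        rw [CStarModuleOld.norm_sq_eq (A := A), hp]
        apply norm_cfcₙ_le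
        intro t ht
        have hs := hne t ht
        have ht0 : 0 ≤ t := hspec ht
        have hs2 : Real.sqrt (t + ε) * Real.sqrt (t + ε) = t + ε :=
          Real.mul_self_sqrt (htpos t ht).le
        have heq : (r • (r • t) + r • (t * f t)) + (r • (f t * t) + f t * (t * f t))
            = t * ((Real.sqrt (t + ε))⁻¹ * (Real.sqrt (t + ε))⁻¹) := by
          simp only [hf_def, smul_eq_mul]
          ring
        rw [heq, Real.norm_eq_abs, abs_of_nonneg (by positivity)]
        rw [show t * ((Real.sqrt (t + ε))⁻¹ * (Real.sqrt (t + ε))⁻¹) = t / (t + ε) by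
          rw [div_eq_mul_inv, ← mul_inv, hs2]]
        rw [div_le_one (htpos t ht)]
        linarith
      nlinarith [norm_nonneg xε]
    -- x = √ε • xε + xε <• d
    have hre : Real.sqrt ε * r = 1 := mul_inv_cancel₀ hsq.ne'
    have hx_eq : x = Real.sqrt ε • xε + xε <• d := by
      apply aux_ext_inner (A := A)
      intro y
      have hyx : ⟪y, xε⟫ = r • ⟪y, x⟫ + ⟪y, x⟫ * c := by
        simp [hxe_def, CStarModuleOld.inner_add_right, CStarModuleOld.inner_op_smul_right,
          CStarModuleOld.inner_smul_right_real]
      rw [CStarModuleOld.inner_add_right, CStarModuleOld.inner_op_smul_right,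
        CStarModuleOld.inner_smul_right_real, hyx]
      have expand : Real.sqrt ε • (r • ⟪y, x⟫ + ⟪y, x⟫ * c) + (r • ⟪y, x⟫ + ⟪y, x⟫ * c) * d
          = (Real.sqrt ε * r) • ⟪y, x⟫ + ⟪y, x⟫ * (Real.sqrt ε • c + r • d + c * d) := by
        simp only [smul_add, mul_add, add_mul, smul_smul, smul_mul_assoc, mul_smul_comm,
          mul_assoc]
        abel
      rw [expand, hA, mul_zero, add_zero, hre, one_smul]
    -- q and its norm
    set u : F := S xε with hu_def
    set q : A := ⟪u, u⟫ with hq_def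
    have hq_sa : IsSelfAdjoint q := CStarModuleOld.isSelfAdjoint_inner_self
    have hq_norm : ‖q‖ ≤ ‖S‖ ^ 2 := by
      have hu_norm : ‖u‖ ≤ ‖S‖ := by
        calc ‖u‖ ≤ ‖S‖ * ‖xε‖ := S.le_opNorm xε
        _ ≤ ‖S‖ * 1 := by gcongr
        _ = ‖S‖ := mul_one _
      calc ‖q‖ = ‖u‖ ^ 2 := CStarModuleOld.norm_sq_eq.symm
      _ ≤ ‖S‖ ^ 2 := pow_le_pow_left₀ (norm_nonneg _) hu_norm 2
    -- S x decomposition and inner product expansion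
    have hSx : S x = Real.sqrt ε • u + u <• d := by
      conv_lhs => rw [hx_eq]
      rw [map_add, aux_map_op_smul S Sadj hS, S.map_smul_of_tower]
    have hE : ⟪S x, S x⟫ = (Real.sqrt ε • (Real.sqrt ε • q) + Real.sqrt ε • (q * d))
        + (Real.sqrt ε • (d * q) + d * (q * d)) := by
      rw [hSx]
      simp only [CStarModuleOld.inner_add_left, CStarModuleOld.inner_add_right,
        CStarModuleOld.inner_op_smul_right, CStarModuleOld.inner_op_smul_left,
        CStarModuleOld.inner_smul_left_real, CStarModuleOld.inner_smul_right_real,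
        hd_sa.star_eq, ← hq_def, smul_add, mul_add, add_mul, smul_mul_assoc,
        mul_smul_comm, mul_assoc]
      abel
    -- move to the unitization
    set w : Unitization ℂ A := Real.sqrt ε • 1 + (d : Unitization ℂ A) with hw_def
    have hw_star : star w = w := by
      simp [hw_def, star_smul, hd_sa.star_eq, ← Unitization.inr_star]
    have hconj : ((⟪S x, S x⟫ : A) : Unitization ℂ A) = star w * (q : Unitization ℂ A) * w := by
      rw [hE, hw_star, hw_def]
      simp only [Unitization.inr_add, Unitization.inr_smul, Unitization.inr_mul,
        add_mul, mul_add, smul_mul_assoc, mul_smul_comm, one_mul, mul_one,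
        smul_add, mul_assoc]
      abel
    have hww : star w * w = (ε • (1 : Unitization ℂ A)) + ((a : A) : Unitization ℂ A) := by
      rw [hw_star, hw_def]
      have expand : ((Real.sqrt ε • (1 : Unitization ℂ A) + (d : Unitization ℂ A)) *
          (Real.sqrt ε • 1 + (d : Unitization ℂ A)))
          = (Real.sqrt ε * Real.sqrt ε) • (1 : Unitization ℂ A)
            + (((2 * Real.sqrt ε) • (d : Unitization ℂ A)) + (d : Unitization ℂ A) * d) := by
        simp only [add_mul, mul_add, smul_add, smul_mul_assoc, mul_smul_comm, one_mul,
          mul_one, smul_smul, two_mul, add_smul]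
        abel
      rw [expand, Real.mul_self_sqrt hε.le]
      congr 1
      rw [← Unitization.inr_mul, ← Unitization.inr_smul, ← Unitization.inr_add, hC]
    calc ((⟪S x, S x⟫ : A) : Unitization ℂ A) = star w * (q : Unitization ℂ A) * w := hconj
    _ ≤ ‖(q : Unitization ℂ A)‖ • (star w * w) :=
        CStarAlgebra.star_left_conjugate_le_norm_smul (hq_sa.inr ℂ)
    _ = ‖q‖ • (star w * w) := by rw [Unitization.norm_inr]
    _ ≤ ‖S‖ ^ 2 • (star w * w) := by
        rw [← sub_nonneg, ← sub_smul]
        exact smul_nonneg (by linarith) (star_mul_self_nonneg w)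
    _ = (‖S‖ ^ 2 * ε) • (1 : Unitization ℂ A) + ‖S‖ ^ 2 • ((a : A) : Unitization ℂ A) := by
        rw [hww, smul_add, smul_smul]
  -- take the limit ε → 0⁺
  have hlim : ((⟪S x, S x⟫ : A) : Unitization ℂ A) ≤ ‖S‖ ^ 2 • ((a : A) : Unitization ℂ A) := by
    refine ge_of_tendsto (f := fun ε : ℝ =>
      (‖S‖ ^ 2 * ε) • (1 : Unitization ℂ A) + ‖S‖ ^ 2 • ((a : A) : Unitization ℂ A))
      (x := nhdsWithin (0:ℝ) (Set.Ioi 0)) ?_ ?_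
    · have hcont : Continuous (fun ε : ℝ =>
          (‖S‖ ^ 2 * ε) • (1 : Unitization ℂ A) + ‖S‖ ^ 2 • ((a : A) : Unitization ℂ A)) := by
        fun_prop
      have h0 := hcont.tendsto 0
      simp only [mul_zero, zero_smul, zero_add] at h0
      exact h0.mono_left nhdsWithin_le_nhds
    · exact eventually_nhdsWithin_of_forall fun ε hε => key ε hε
  rw [← Unitization.inr_smul ℂ] at hlim
  exact (Unitization.inr_le_iff _ _ CStarModuleOld.isSelfAdjoint_inner_self
    (IsSelfAdjoint.smul (star_trivial _) ha_sa)).mp hlim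


end Aux

/-- **Theorem 3.2 (norm of the reduced solution, eq. (3.2)).**  Let `E, H, K` be Hilbert
`A`-modules, `T ∈ L(E,K)` adjointable with the norm closure of `R(T*)` orthogonally
complemented in `E`, `T' ∈ L(H,K)` adjointable with `R(T') ⊆ R(T)`, and let `D ∈ L(H,E)` be
the (unique) adjointable operator with `T' = T D` and `R(D) ⊆ N(T)⊥`.  Then
`‖D‖² = inf {λ > 0 : T' (T')* ≤ λ • T T*}`. -/
theorem norm_sq_reduced_solution_eq_sInf
    {A : Type*} [NonUnitalCStarAlgebra A] [PartialOrder A] [StarOrderedRing A]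
    {E H K : Type*}
    [NormedAddCommGroup E] [NormedSpace ℂ E] [SMul Aᵐᵒᵖ E] [CStarModuleOld A E] [CompleteSpace E]
    [NormedAddCommGroup H] [NormedSpace ℂ H] [SMul Aᵐᵒᵖ H] [CStarModuleOld A H] [CompleteSpace H]
    [NormedAddCommGroup K] [NormedSpace ℂ K] [SMul Aᵐᵒᵖ K] [CStarModuleOld A K] [CompleteSpace K]
    (T : E →L[ℂ] K) (Tadj : K →L[ℂ] E)
    (hT : ∀ (x : E) (y : K), inner (𝕜 := A) (T x) y = inner A x (Tadj y))
    (hcompl : ∀ x : E, ∃ y z : E,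
      y ∈ (LinearMap.range (Tadj : K →ₗ[ℂ] E)).topologicalClosure ∧
      (∀ w ∈ (LinearMap.range (Tadj : K →ₗ[ℂ] E)).topologicalClosure,
        inner (𝕜 := A) z w = 0) ∧
      x = y + z)
    (T' : H →L[ℂ] K) (T'adj : K →L[ℂ] H)
    (hT' : ∀ (x : H) (y : K), inner (𝕜 := A) (T' x) y = inner A x (T'adj y))
    (hrange : Set.range T' ⊆ Set.range T)
    (D : H →L[ℂ] E) (Dadj : E →L[ℂ] H)
    (hD : ∀ (x : H) (y : E), inner (𝕜 := A) (D x) y = inner A x (Dadj y))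
    (hTD : ∀ h : H, T' h = T (D h))
    (hDrange : ∀ (h : H) (e : E), T e = 0 → inner (𝕜 := A) (D h) e = 0) :
    ‖D‖ ^ 2 = sInf {lam : ℝ | 0 < lam ∧
      ∀ z : K, inner (𝕜 := A) (T' (T'adj z)) z ≤ lam • inner A (T (Tadj z)) z} := by
  have hDadjAdj : ∀ (x : E) (y : H), inner (𝕜 := A) (Dadj x) y = inner A x (D y) :=
    fun x y => (aux_inner_rev D Dadj hD y x).symm
  have hT'adj_eq : ∀ k : K, T'adj k = Dadj (Tadj k) := by
    intro k
    apply aux_ext_inner (A := A)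
    intro y
    rw [← hT' y k, ← hD y (Tadj k), ← hT (D y) k, ← hTD y]
  have hub : ∀ lam ∈ {lam : ℝ | 0 < lam ∧
      ∀ z : K, inner (𝕜 := A) (T' (T'adj z)) z ≤ lam • inner A (T (Tadj z)) z},
      ‖D‖ ^ 2 ≤ lam := by
    rintro lam ⟨hl0, hle⟩
    have hDadj_bound : ∀ e : E, ‖Dadj e‖ ≤ Real.sqrt lam * ‖e‖ := by
      intro e
      obtain ⟨y, z, hy, hz, hyz⟩ := hcompl e
      have hTz : T z = 0 := by
        have h1 : inner (𝕜 := A) (T z) (T z) = 0 := by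
          rw [hT z (T z)]
          exact hz (Tadj (T z)) (Submodule.le_topologicalClosure _ ⟨T z, rfl⟩)
        exact CStarModuleOld.inner_self.mp h1
      have hDz : Dadj z = 0 := by
        have h1 : inner (𝕜 := A) (Dadj z) (Dadj z) = 0 := by
          rw [hDadjAdj z (Dadj z), ← CStarModuleOld.star_inner,
            hDrange (Dadj z) z hTz, star_zero]
        exact CStarModuleOld.inner_self.mp h1
      have hclos : ∀ v ∈ (LinearMap.range (Tadj : K →ₗ[ℂ] E)).topologicalClosure,
          ‖Dadj v‖ ^ 2 ≤ lam * ‖v‖ ^ 2 := by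
        intro v hv
        have hsub : ((LinearMap.range (Tadj : K →ₗ[ℂ] E)) : Set E) ⊆
            {v : E | ‖Dadj v‖ ^ 2 ≤ lam * ‖v‖ ^ 2} := by
          rintro _ ⟨k, rfl⟩
          simp only [Set.mem_setOf_eq, ContinuousLinearMap.coe_coe]
          have hnn : (0 : A) ≤ inner (𝕜 := A) (T' (T'adj k)) k := by
            rw [hT' (T'adj k) k]
            exact CStarModuleOld.inner_self_nonneg
          calc ‖Dadj (Tadj k)‖ ^ 2 = ‖inner (𝕜 := A) (Dadj (Tadj k)) (Dadj (Tadj k))‖ :=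
              CStarModuleOld.norm_sq_eq
          _ = ‖inner (𝕜 := A) (T' (T'adj k)) k‖ := by
              rw [← hT'adj_eq k, hT' (T'adj k) k, hT'adj_eq k]
          _ ≤ ‖lam • inner (𝕜 := A) (T (Tadj k)) k‖ :=
              CStarAlgebra.norm_le_norm_of_nonneg_of_le hnn (hle k)
          _ = lam * ‖inner (𝕜 := A) (Tadj k) (Tadj k)‖ := by
              rw [hT (Tadj k) k, norm_smul, Real.norm_eq_abs, abs_of_pos hl0]
          _ = lam * ‖Tadj k‖ ^ 2 := by rw [← CStarModuleOld.norm_sq_eq]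
        have hCc : IsClosed {v : E | ‖Dadj v‖ ^ 2 ≤ lam * ‖v‖ ^ 2} := by
          apply isClosed_le <;> fun_prop
        have hv' : v ∈ closure ((LinearMap.range (Tadj : K →ₗ[ℂ] E)) : Set E) := by
          rw [← Submodule.topologicalClosure_coe]; exact hv
        exact closure_minimal hsub hCc hv'
      have h1 : Dadj e = Dadj y := by rw [hyz, map_add, hDz, add_zero]
      have h2 : ‖y‖ ^ 2 ≤ ‖e‖ ^ 2 := by
        rw [CStarModuleOld.norm_sq_eq (A := A), CStarModuleOld.norm_sq_eq (A := A)]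
        apply CStarAlgebra.norm_le_norm_of_nonneg_of_le CStarModuleOld.inner_self_nonneg
        have hzy : inner (𝕜 := A) z y = 0 := hz y hy
        have hyz0 : inner (𝕜 := A) y z = 0 := by
          rw [← CStarModuleOld.star_inner, hzy, star_zero]
        calc inner (𝕜 := A) y y ≤ inner (𝕜 := A) y y + inner (𝕜 := A) z z :=
            le_add_of_nonneg_right CStarModuleOld.inner_self_nonneg
        _ = inner (𝕜 := A) e e := by
            rw [hyz]
            simp [CStarModuleOld.inner_add_left, CStarModuleOld.inner_add_right, hzy, hyz0]
      have h3 : ‖Dadj y‖ ^ 2 ≤ lam * ‖e‖ ^ 2 :=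
        le_trans (hclos y hy) (mul_le_mul_of_nonneg_left h2 hl0.le)
      rw [h1]
      have h4 : (Real.sqrt lam * ‖e‖) ^ 2 = lam * ‖e‖ ^ 2 := by
        rw [mul_pow, Real.sq_sqrt hl0.le]
      nlinarith [norm_nonneg (Dadj y), mul_nonneg (Real.sqrt_nonneg lam) (norm_nonneg e)]
    have h5 : ‖Dadj‖ ≤ Real.sqrt lam :=
      Dadj.opNorm_le_bound (Real.sqrt_nonneg lam) hDadj_bound
    have h6 : ‖D‖ ≤ Real.sqrt lam := le_trans (aux_opNorm_le D Dadj hD) h5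
    calc ‖D‖ ^ 2 ≤ Real.sqrt lam ^ 2 := pow_le_pow_left₀ (norm_nonneg D) h6 2
    _ = lam := Real.sq_sqrt hl0.le
  have hmem : ∀ lam : ℝ, 0 < lam → ‖D‖ ^ 2 ≤ lam → lam ∈ {lam : ℝ | 0 < lam ∧
      ∀ z : K, inner (𝕜 := A) (T' (T'adj z)) z ≤ lam • inner A (T (Tadj z)) z} := by
    intro lam hl0 hlD
    refine ⟨hl0, fun z => ?_⟩
    have hDadjleq : ‖Dadj‖ ≤ ‖D‖ := aux_opNorm_le Dadj D hDadjAdj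
    rw [hT' (T'adj z) z, hT (Tadj z) z, hT'adj_eq z]
    calc inner (𝕜 := A) (Dadj (Tadj z)) (Dadj (Tadj z))
        ≤ ‖Dadj‖ ^ 2 • inner (𝕜 := A) (Tadj z) (Tadj z) :=
          aux_inner_map_le Dadj D hDadjAdj (Tadj z)
    _ ≤ lam • inner (𝕜 := A) (Tadj z) (Tadj z) := by
        rw [← sub_nonneg, ← sub_smul]
        refine smul_nonneg ?_ CStarModuleOld.inner_self_nonneg
        nlinarith [norm_nonneg D, norm_nonneg Dadj]
  apply le_antisymm
  · refine le_csInf ⟨‖D‖ ^ 2 + 1, hmem _ (by positivity) (by linarith)⟩ fun b hb => hub b hb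
  · refine le_of_forall_pos_le_add fun δ hδ => ?_
    exact csInf_le ⟨0, fun b hb => hb.1.le⟩ (hmem _ (by positivity) (by linarith))
end

section
/- Let E be an infinite-dimensional complex Hilbert space and let s ∈ 𝕂(E) be such that the set {s ∘ k : k ∈ 𝕂(E)} is dense in 𝕂(E) with respect to the operator norm. Then there is no y ∈ 𝕂(E) with s ∘ y = s. -/
open Metric Set


open Metric Set

lemma rankOne_isCompactOperator {E : Type*} [NormedAddCommGroup E] [InnerProductSpace ℂ E]
    (u : E) : IsCompactOperator (fun x : E => (inner ℂ u x : ℂ) • u) := by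
  refine ⟨(fun c : ℂ => c • u) '' closedBall 0 ‖u‖, ?_, ?_⟩
  · exact (isCompact_closedBall 0 ‖u‖).image (by fun_prop)
  · refine Filter.mem_of_superset (closedBall_mem_nhds 0 one_pos) ?_
    intro x hx
    refine ⟨inner ℂ u x, ?_, rfl⟩
    simp only [mem_closedBall, dist_zero_right] at hx ⊢
    calc ‖(inner ℂ u x : ℂ)‖ ≤ ‖u‖ * ‖x‖ := norm_inner_le_norm u x
    _ ≤ ‖u‖ * 1 := by gcongr
    _ = ‖u‖ := mul_one _


/-- Let `E` be an infinite-dimensional complex Hilbert space and let `s` be a compact operator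
on `E` such that `{s ∘ k : k compact}` is dense in the compact operators with respect to the
operator norm.  Then there is no compact operator `y` with `s ∘ y = s`. -/
theorem not_exists_compact_right_unit
    {E : Type*} [NormedAddCommGroup E] [InnerProductSpace ℂ E] [CompleteSpace E]
    (hE : ¬ FiniteDimensional ℂ E)
    (s : E →L[ℂ] E) (hs : IsCompactOperator s)
    (hdense : ∀ k : E →L[ℂ] E, IsCompactOperator k → ∀ ε : ℝ, 0 < ε →
      ∃ k' : E →L[ℂ] E, IsCompactOperator k' ∧ ‖s.comp k' - k‖ < ε) :
    ¬ ∃ y : E →L[ℂ] E, IsCompactOperator y ∧ s.comp y = s := by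
  rintro ⟨y, hy, hsy⟩
  set K : Submodule ℂ E := LinearMap.ker (s : E →ₗ[ℂ] E) with hK
  haveI : CompleteSpace K := (ContinuousLinearMap.isClosed_ker s).completeSpace_coe
  set M : Submodule ℂ E := Kᗮ with hM
  set P : E →L[ℂ] E := M.subtypeL.comp (M.orthogonalProjectionOnto) with hPdef
  have hMo : Mᗮ = K := Submodule.orthogonal_orthogonal K
  -- P = P ∘ y
  have hPy : ∀ x, P x = P (y x) := by
    intro x
    have hxk : x - y x ∈ Mᗮ := by
      rw [hMo]
      show x - y x ∈ LinearMap.ker (s : E →ₗ[ℂ] E)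
      rw [LinearMap.mem_ker, map_sub, sub_eq_zero]
      exact (ContinuousLinearMap.ext_iff.mp hsy x).symm
    have h0 : M.orthogonalProjectionOnto (x - y x) = 0 :=
      Submodule.orthogonalProjectionOnto_eq_zero_iff.mpr hxk
    have hz : P x - P (y x) = 0 := by
      rw [← map_sub, hPdef]
      simp [h0]
    exact sub_eq_zero.mp hz
  have hPc : IsCompactOperator P := by
    have := hy.continuous_comp P.continuous
    have heq : (⇑P ∘ ⇑y) = ⇑P := by
      ext x; exact (hPy x).symm
    rwa [heq] at this
  -- M is finite dimensional
  obtain ⟨C, hCc, hCm⟩ := hPc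
  obtain ⟨r, hr, hball⟩ := Metric.nhds_basis_closedBall.mem_iff.mp hCm
  have hMfd : FiniteDimensional ℂ M := by
    have hBsub : Subtype.val '' (closedBall (0 : M) r) ⊆ C := by
      rintro _ ⟨m, hm, rfl⟩
      have hPm : P (m : E) = m := by
        simp [hPdef, Submodule.orthogonalProjectionOnto_mem_subspace_eq_self m]
      have : (m : E) ∈ closedBall (0 : E) r := by
        simpa [dist_zero_right] using (by simpa [dist_zero_right] using hm : ‖(m : E)‖ ≤ r)
      have := hball this
      rwa [Set.mem_preimage, hPm] at this
    have hBclosed : IsClosed (Subtype.val '' (closedBall (0 : M) r)) := by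
      have : Subtype.val '' (closedBall (0 : M) r) = (M : Set E) ∩ closedBall (0 : E) r := by
        ext x
        constructor
        · rintro ⟨m, hm, rfl⟩
          exact ⟨m.2, by simpa [dist_zero_right] using (by simpa [dist_zero_right] using hm : ‖(m : E)‖ ≤ r)⟩
        · rintro ⟨hxM, hx⟩
          exact ⟨⟨x, hxM⟩, by simpa [Metric.mem_closedBall, dist_zero_right] using (by simpa [dist_zero_right] using hx : ‖x‖ ≤ r), rfl⟩
      rw [this]
      exact (Submodule.isClosed_orthogonal K).inter Metric.isClosed_closedBall
    have hBcompact : IsCompact (closedBall (0 : M) r) := by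
      rw [Topology.IsEmbedding.subtypeVal.isCompact_iff]
      exact hCc.of_isClosed_subset hBclosed hBsub
    exact FiniteDimensional.of_isCompact_closedBall₀ ℂ hr hBcompact
  -- range s is finite dimensional
  set R : Submodule ℂ E := LinearMap.range (s : E →ₗ[ℂ] E) with hRdef
  have hRle : R ≤ M.map (s : E →ₗ[ℂ] E) := by
    rintro _ ⟨x, rfl⟩
    have hxK : x - P x ∈ K := by
      rw [← hMo]
      exact Submodule.sub_starProjection_mem_orthogonal x
    have hsx : s x = s (P x) := by
      have : s (x - P x) = 0 := hxK
      rw [map_sub, sub_eq_zero] at this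
      exact this
    exact ⟨P x, M.orthogonalProjectionOnto x |>.2, hsx.symm⟩
  haveI : FiniteDimensional ℂ (M.map (s : E →ₗ[ℂ] E)) := by
    have : FiniteDimensional ℂ (M.map (s : E →ₗ[ℂ] E)) := inferInstance
    convert this using 2
  haveI hRfd : FiniteDimensional ℂ R := Submodule.finiteDimensional_of_le hRle
  haveI : CompleteSpace R := FiniteDimensional.complete ℂ R
  -- R is dense, hence R = ⊤
  have hRbot : Rᗮ = ⊥ := by
    rw [Submodule.eq_bot_iff]
    intro u hu
    by_contra hu0
    have hun : 0 < ‖u‖ := norm_pos_iff.mpr hu0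
    set k : E →L[ℂ] E := (innerSL ℂ u).smulRight u with hkdef
    have hkc : IsCompactOperator k := rankOne_isCompactOperator u
    obtain ⟨k', hk'c, hk'⟩ := hdense k hkc (‖u‖ ^ 2 / 2) (by positivity)
    have hinner : (inner ℂ ((s.comp k' - k) u) u : ℂ) = -(‖u‖ ^ 2 * ‖u‖ ^ 2 : ℝ) := by
      have h1 : (inner ℂ (s (k' u)) u : ℂ) = 0 :=
        (Submodule.mem_orthogonal R u).mp hu (s (k' u)) ⟨k' u, rfl⟩
      have h2 : (inner ℂ (k u) u : ℂ) = (‖u‖ ^ 2 * ‖u‖ ^ 2 : ℝ) := by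
        simp only [hkdef, ContinuousLinearMap.smulRight_apply, innerSL_apply_apply,
          inner_smul_left, inner_conj_symm]
        rw [@inner_self_eq_norm_sq_to_K ℂ]
        push_cast
        ring_nf
        norm_cast
      simp only [ContinuousLinearMap.coe_sub', Pi.sub_apply, inner_sub_left,
        ContinuousLinearMap.comp_apply, h1, h2]
      push_cast
      ring
    have hle : (‖u‖ ^ 2 * ‖u‖ ^ 2 : ℝ) ≤ ‖s.comp k' - k‖ * ‖u‖ * ‖u‖ := by
      have := @norm_inner_le_norm ℂ _ _ _ _ ((s.comp k' - k) u) u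
      rw [hinner] at this
      have h3 : ‖(-(‖u‖ ^ 2 * ‖u‖ ^ 2 : ℝ) : ℂ)‖ = ‖u‖ ^ 2 * ‖u‖ ^ 2 := by
        rw [norm_neg, Complex.norm_real]
        exact abs_of_nonneg (by positivity)
      rw [h3] at this
      calc ‖u‖ ^ 2 * ‖u‖ ^ 2 ≤ ‖(s.comp k' - k) u‖ * ‖u‖ := this
      _ ≤ (‖s.comp k' - k‖ * ‖u‖) * ‖u‖ := by gcongr; exact (s.comp k' - k).le_opNorm u
      _ = ‖s.comp k' - k‖ * ‖u‖ * ‖u‖ := rfl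
    have hsq : ‖u‖ ^ 2 = ‖u‖ * ‖u‖ := sq ‖u‖
    nlinarith [hk', hle, hun, mul_pos hun hun]
  have hRtop : R = ⊤ := Submodule.orthogonal_eq_bot_iff.mp hRbot
  apply hE
  haveI : FiniteDimensional ℂ (⊤ : Submodule ℂ E) := hRtop ▸ hRfd
  exact FiniteDimensional.of_injective (Submodule.topEquiv (R := ℂ) (M := E)).symm.toLinearMap
    (Submodule.topEquiv).symm.injective
end
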